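/- arXiv:1308.6621 — 5 statements merged into one kernel-verified Lean document; each statement's English description precedes it below -/
import Mathlib

section
/- For S = {i_1,...,i_k} ⊆ {2,...,n-1} and T = {n+1-i_k,...,n+1-i_1}, the number of signed permutations in B_n with peak set S equals the number with peak set T. -/
open Finset

/-- Value at (1-indexed) position `i` of the signed permutation represented by a pair
`(σ, ε)`: the value is `±(σ(i)+1)`, negative iff `ε i = true`. Returns 0 out of range. -/
def bval (n : ℕ) (π : Equiv.Perm (Fin n) × (Fin n → Bool)) (i : ℕ) : ℤ :=
  if h : i - 1 < n then
    (if π.2 ⟨i - 1, h⟩ then (-1 : ℤ) else 1) * (((π.1 ⟨i - 1, h⟩ : ℕ) : ℤ) + 1)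
  else 0

/-- Peak set of a signed permutation: positions `i ∈ {2,…,n-1}` with `π_{i-1} < π_i > π_{i+1}`. -/
def bPeakSet (n : ℕ) (π : Equiv.Perm (Fin n) × (Fin n → Bool)) : Finset ℕ :=
  (Finset.Icc 2 (n - 1)).filter fun i =>
    bval n π (i - 1) < bval n π i ∧ bval n π (i + 1) < bval n π i

/-- `#P_B(S,n)`: number of signed permutations in `B_n` with peak set exactly `S`. -/
def PB (n : ℕ) (S : Finset ℕ) : ℕ :=
  (Finset.univ.filter fun π : Equiv.Perm (Fin n) × (Fin n → Bool) => bPeakSet n π = S).card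

/-- Value with the convention `π_0 = 0`. -/
def bvalHat (n : ℕ) (π : Equiv.Perm (Fin n) × (Fin n → Bool)) (i : ℕ) : ℤ :=
  if i = 0 then 0 else bval n π i

/-- Peak set with `π_0 = 0`: positions `i ∈ {1,…,n-1}` with `π_{i-1} < π_i > π_{i+1}`. -/
def bPeakSetHat (n : ℕ) (π : Equiv.Perm (Fin n) × (Fin n → Bool)) : Finset ℕ :=
  (Finset.Icc 1 (n - 1)).filter fun i =>
    bvalHat n π (i - 1) < bvalHat n π i ∧ bvalHat n π (i + 1) < bvalHat n π i

/-- `#P̂_B(S,n)`: signed permutations with `π_0 = 0` prepended and peak set exactly `S`. -/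
def PBhat (n : ℕ) (S : Finset ℕ) : ℕ :=
  (Finset.univ.filter fun π : Equiv.Perm (Fin n) × (Fin n → Bool) => bPeakSetHat n π = S).card

/-- Value at (1-indexed) position `i` of an ordinary permutation of `{1,…,n}`. -/
def sval (n : ℕ) (π : Equiv.Perm (Fin n)) (i : ℕ) : ℤ :=
  if h : i - 1 < n then ((π ⟨i - 1, h⟩ : ℕ) : ℤ) + 1 else 0

/-- Peak set of an ordinary permutation: positions `i ∈ {2,…,n-1}`. -/
def sPeakSet (n : ℕ) (π : Equiv.Perm (Fin n)) : Finset ℕ :=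
  (Finset.Icc 2 (n - 1)).filter fun i =>
    sval n π (i - 1) < sval n π i ∧ sval n π (i + 1) < sval n π i

/-- `#P(S,n)`: number of permutations of `{1,…,n}` with peak set exactly `S`. -/
def PP (n : ℕ) (S : Finset ℕ) : ℕ :=
  (Finset.univ.filter fun π : Equiv.Perm (Fin n) => sPeakSet n π = S).card

def svalHat (n : ℕ) (π : Equiv.Perm (Fin n)) (i : ℕ) : ℤ :=
  if i = 0 then 0 else sval n π i

/-- Peak set with the convention `π_0 = 0`: positions `i ∈ {1,…,n-1}`. -/
def sPeakSetHat (n : ℕ) (π : Equiv.Perm (Fin n)) : Finset ℕ :=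
  (Finset.Icc 1 (n - 1)).filter fun i =>
    svalHat n π (i - 1) < svalHat n π i ∧ svalHat n π (i + 1) < svalHat n π i

/-- `#P̂(S,n)`: permutations of `{1,…,n}` with `π_0 = 0` prepended and peak set exactly `S`. -/
def PPhat (n : ℕ) (S : Finset ℕ) : ℕ :=
  (Finset.univ.filter fun π : Equiv.Perm (Fin n) => sPeakSetHat n π = S).card

/-! Reading a signed permutation backwards, `π_1 … π_n ↦ π_n … π_1`, is an involution of `B_n`
which moves a peak at position `i` to position `n + 1 - i`. -/

def bRev (n : ℕ) (π : Equiv.Perm (Fin n) × (Fin n → Bool)) :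
    Equiv.Perm (Fin n) × (Fin n → Bool) :=
  (π.1 * Fin.revPerm, π.2 ∘ Fin.rev)

lemma bRev_involutive (n : ℕ) : Function.Involutive (bRev n) := fun π => by
  ext <;> simp [bRev]

lemma bval_bRev (n : ℕ) (π : Equiv.Perm (Fin n) × (Fin n → Bool)) {i : ℕ}
    (h1 : 1 ≤ i) (h2 : i ≤ n) :
    bval n (bRev n π) i = bval n π (n + 1 - i) := by
  have hi : i - 1 < n := by omega
  have hj : n + 1 - i - 1 < n := by omega
  have hrev : Fin.rev ⟨i - 1, hi⟩ = (⟨n + 1 - i - 1, hj⟩ : Fin n) := by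
    ext
    simp only [Fin.val_rev]
    omega
  simp [bval, bRev, dif_pos hi, dif_pos hj, hrev]

lemma bval_bRev_peak_iff (n : ℕ) (π : Equiv.Perm (Fin n) × (Fin n → Bool)) {i : ℕ}
    (h1 : 2 ≤ i) (h2 : i ≤ n - 1) :
    (bval n (bRev n π) (i - 1) < bval n (bRev n π) i ∧
        bval n (bRev n π) (i + 1) < bval n (bRev n π) i) ↔
      (bval n π (n + 1 - i - 1) < bval n π (n + 1 - i) ∧
        bval n π (n + 1 - i + 1) < bval n π (n + 1 - i)) := by
  rw [bval_bRev n π (i := i - 1) (by omega) (by omega), bval_bRev n π (i := i) (by omega) (by omega),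
    bval_bRev n π (i := i + 1) (by omega) (by omega), and_comm,
    show n + 1 - (i - 1) = n + 1 - i + 1 by omega, show n + 1 - (i + 1) = n + 1 - i - 1 by omega]

lemma bPeakSet_bRev (n : ℕ) (π : Equiv.Perm (Fin n) × (Fin n → Bool)) :
    bPeakSet n (bRev n π) = (bPeakSet n π).image (n + 1 - ·) := by
  ext j
  simp only [bPeakSet, Finset.mem_image, Finset.mem_filter, Finset.mem_Icc]
  constructor
  · rintro ⟨⟨h2, h3⟩, hpeak⟩
    exact ⟨n + 1 - j, ⟨⟨by omega, by omega⟩, (bval_bRev_peak_iff n π h2 h3).mp hpeak⟩, by omega⟩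
  · rintro ⟨k, ⟨⟨h2, h3⟩, hpeak⟩, rfl⟩
    have hk : n + 1 - (n + 1 - k) = k := by omega
    refine ⟨⟨by omega, by omega⟩, ?_⟩
    rwa [bval_bRev_peak_iff n π (by omega) (by omega), hk]

lemma image_tsub_image_tsub {m : ℕ} {T : Finset ℕ} (hT : T ⊆ Finset.Iic m) :
    (T.image (m - ·)).image (m - ·) = T := by
  rw [Finset.image_image]
  conv_rhs => rw [← Finset.image_id (s := T)]
  refine Finset.image_congr fun x hx => ?_
  simpa using Nat.sub_sub_self (Finset.mem_Iic.mp (hT hx))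

/-- reflection symmetry of peak-set counts in `B_n`. -/
theorem stmt1 (n : ℕ) (S : Finset ℕ) (hS : S ⊆ Finset.Icc 2 (n - 1)) :
    PB n S = PB n (S.image fun i => n + 1 - i) := by
  have hIcc : Finset.Icc 2 (n - 1) ⊆ Finset.Iic (n + 1) :=
    Finset.Icc_subset_Iic_self.trans (Finset.Iic_subset_Iic.mpr (by omega))
  refine Finset.card_equiv (bRev_involutive n).toPerm fun π => ?_
  simp only [Finset.mem_filter, Finset.mem_univ, true_and, Function.Involutive.coe_toPerm,
    bPeakSet_bRev]
  refine ⟨fun h => h ▸ rfl, fun h => ?_⟩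
  have hπ : bPeakSet n π ⊆ Finset.Iic (n + 1) := (Finset.filter_subset _ _).trans hIcc
  rw [← image_tsub_image_tsub hπ, h, image_tsub_image_tsub (hS.trans hIcc)]
end

section
/- The number of signed permutations in B_n with empty peak set equals 2^{2n-1}. -/
open Finset

namespace Stmt2Aux
open Equiv Finset

variable {n : ℕ}

/-! ### Words of permutations -/

def word (σ : Equiv.Perm (Fin n)) (j : ℕ) : ℕ :=
  if h : j < n then (σ ⟨j, h⟩ : ℕ) else 0

lemma word_eq (σ : Equiv.Perm (Fin n)) {j : ℕ} (h : j < n) :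
    word σ j = (σ ⟨j, h⟩ : ℕ) := dif_pos h

lemma word_lt_iff (σ : Equiv.Perm (Fin n)) {a b : ℕ} (ha : a < n) (hb : b < n) :
    word σ a < word σ b ↔ σ ⟨a, ha⟩ < σ ⟨b, hb⟩ := by
  rw [word_eq σ ha, word_eq σ hb, Fin.lt_def]

lemma word_inj (σ : Equiv.Perm (Fin n)) {a b : ℕ} (ha : a < n) (hb : b < n)
    (h : word σ a = word σ b) : a = b := by
  rw [word_eq σ ha, word_eq σ hb] at h
  have h2 := σ.injective (Fin.ext h)
  rw [Fin.mk.injEq] at h2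
  exact h2

lemma word_min (σ : Equiv.Perm (Fin n)) (hn : 0 < n) :
    word σ ((σ.symm ⟨0, hn⟩ : Fin n) : ℕ) = 0 := by
  rw [word_eq σ (σ.symm ⟨0, hn⟩).isLt]
  have h : (⟨((σ.symm ⟨0, hn⟩ : Fin n) : ℕ), (σ.symm ⟨0, hn⟩).isLt⟩ : Fin n) = σ.symm ⟨0, hn⟩ :=
    Fin.ext rfl
  rw [h, Equiv.apply_symm_apply]

lemma sval_eq_word (σ : Equiv.Perm (Fin n)) (i : ℕ) (h1 : 1 ≤ i) (h2 : i ≤ n) :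
    sval n σ i = ((word σ (i - 1) : ℕ) : ℤ) + 1 := by
  rw [sval, dif_pos (show i - 1 < n by omega), word_eq σ (show i - 1 < n by omega)]

lemma castlt (a b : ℕ) : ((a : ℕ) : ℤ) + 1 < ((b : ℕ) : ℤ) + 1 ↔ a < b := by omega

lemma noPeak_iff (σ : Equiv.Perm (Fin n)) :
    sPeakSet n σ = ∅ ↔ ∀ j : ℕ, 1 ≤ j → j + 1 < n →
      ¬(word σ (j - 1) < word σ j ∧ word σ (j + 1) < word σ j) := by
  rw [sPeakSet, Finset.filter_eq_empty_iff]
  constructor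
  · intro H j h1 h2
    have hmem : j + 1 ∈ Finset.Icc 2 (n - 1) := by rw [Finset.mem_Icc]; omega
    have h := H hmem
    simp only [Nat.add_sub_cancel] at h
    rw [sval_eq_word σ j (by omega) (by omega), sval_eq_word σ (j + 1) (by omega) (by omega),
        sval_eq_word σ (j + 1 + 1) (by omega) (by omega), castlt, castlt] at h
    simp only [Nat.add_sub_cancel] at h
    exact h
  · intro H i hi
    rw [Finset.mem_Icc] at hi
    have h := H (i - 1) (by omega) (by omega)
    rw [show i - 1 + 1 = i from by omega] at h
    rw [sval_eq_word σ (i - 1) (by omega) (by omega), sval_eq_word σ i (by omega) (by omega),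
        sval_eq_word σ (i + 1) (by omega) (by omega), castlt, castlt]
    simp only [Nat.add_sub_cancel]
    exact h

/-! ### Valley structure of no-peak permutations -/

lemma left_step (σ : Equiv.Perm (Fin n)) (hσ : sPeakSet n σ = ∅) (hn : 0 < n)
    (j : ℕ) (hj : j + 1 ≤ ((σ.symm ⟨0, hn⟩ : Fin n) : ℕ)) :
    word σ (j + 1) < word σ j := by
  set m : ℕ := ((σ.symm ⟨0, hn⟩ : Fin n) : ℕ) with hm
  have hmn : m < n := (σ.symm ⟨0, hn⟩).isLt
  by_contra hcon
  have hasc : word σ j < word σ (j + 1) := by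
    rcases Nat.lt_trichotomy (word σ j) (word σ (j + 1)) with h | h | h
    · exact h
    · exact absurd (word_inj σ (by omega) (by omega) h) (by omega)
    · exact absurd h hcon
  have claim : ∀ k, j + 1 ≤ k → k ≤ m → word σ (k - 1) < word σ k := by
    intro k hk1
    induction k, hk1 using Nat.le_induction with
    | base => intro _; simpa using hasc
    | succ k hk ih =>
      intro hk1
      have prev : word σ (k - 1) < word σ k := ih (by omega)
      have hnp := (noPeak_iff σ).1 hσ k (by omega) (by omega)
      rcases Nat.lt_trichotomy (word σ k) (word σ (k + 1)) with h | h | h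
      · simpa using h
      · exact absurd (word_inj σ (by omega) (by omega) h) (by omega)
      · exact absurd ⟨prev, h⟩ hnp
  have hfin : word σ (m - 1) < word σ m := claim m (by omega) (le_refl m)
  rw [word_min σ hn] at hfin
  omega

lemma right_step (σ : Equiv.Perm (Fin n)) (hσ : sPeakSet n σ = ∅) (hn : 0 < n)
    (j : ℕ) (hj1 : ((σ.symm ⟨0, hn⟩ : Fin n) : ℕ) ≤ j) (hj2 : j + 1 < n) :
    word σ j < word σ (j + 1) := by
  set m : ℕ := ((σ.symm ⟨0, hn⟩ : Fin n) : ℕ) with hm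
  by_contra hcon
  have hdesc : word σ (j + 1) < word σ j := by
    rcases Nat.lt_trichotomy (word σ (j + 1)) (word σ j) with h | h | h
    · exact h
    · exact absurd (word_inj σ (by omega) (by omega) h) (by omega)
    · exact absurd h hcon
  have claim : ∀ d, d ≤ j - m → word σ (j - d + 1) < word σ (j - d) := by
    intro d
    induction d with
    | zero => intro _; simpa using hdesc
    | succ d ih =>
      intro hd
      have prev : word σ (j - d + 1) < word σ (j - d) := ih (by omega)
      have hnp := (noPeak_iff σ).1 hσ (j - d) (by omega) (by omega)
      have step : word σ (j - d) < word σ (j - d - 1) := by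
        rcases Nat.lt_trichotomy (word σ (j - d - 1)) (word σ (j - d)) with h | h | h
        · exact absurd ⟨h, prev⟩ hnp
        · exact absurd (word_inj σ (by omega) (by omega) h) (by omega)
        · exact h
      rw [show j - (d + 1) + 1 = j - d from by omega, show j - (d + 1) = j - d - 1 from by omega]
      exact step
  have hfin := claim (j - m) (le_refl _)
  rw [show j - (j - m) = m from by omega] at hfin
  rw [word_min σ hn] at hfin
  omega

lemma left_chain (σ : Equiv.Perm (Fin n)) (hσ : sPeakSet n σ = ∅) (hn : 0 < n)
    {a b : ℕ} (hab : a < b) (hbm : b ≤ ((σ.symm ⟨0, hn⟩ : Fin n) : ℕ)) :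
    word σ b < word σ a := by
  induction b with
  | zero => omega
  | succ b ih =>
    rcases Nat.lt_or_ge a b with h | h
    · exact lt_trans (left_step σ hσ hn b (by omega)) (ih h (by omega))
    · have hab' : a = b := by omega
      subst hab'
      exact left_step σ hσ hn a (by omega)

lemma right_chain (σ : Equiv.Perm (Fin n)) (hσ : sPeakSet n σ = ∅) (hn : 0 < n)
    {a b : ℕ} (hma : ((σ.symm ⟨0, hn⟩ : Fin n) : ℕ) ≤ a) (hab : a < b) (hbn : b < n) :
    word σ a < word σ b := by
  induction b with
  | zero => omega
  | succ b ih =>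
    rcases Nat.lt_or_ge a b with h | h
    · exact lt_trans (ih h (by omega)) (right_step σ hσ hn b (by omega) (by omega))
    · have hab' : a = b := by omega
      subst hab'
      exact right_step σ hσ hn a (by omega) (by omega)

/-! ### Uniqueness of monotone enumerations -/

lemma strictMono_eq {k : ℕ} {S : Finset (Fin n)} (hS : S.card = k) {f g : Fin k → Fin n}
    (hf : StrictMono f) (hg : StrictMono g)
    (hfS : ∀ i, f i ∈ S) (hgS : ∀ i, g i ∈ S) : f = g := by
  rw [Finset.orderEmbOfFin_unique hS hfS hf, Finset.orderEmbOfFin_unique hS hgS hg]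

lemma strictAnti_eq {k : ℕ} {S : Finset (Fin n)} (hS : S.card = k) {f g : Fin k → Fin n}
    (hf : ∀ i j : Fin k, i < j → f j < f i) (hg : ∀ i j : Fin k, i < j → g j < g i)
    (hfS : ∀ i, f i ∈ S) (hgS : ∀ i, g i ∈ S) : f = g := by
  have hf' : StrictMono (fun i : Fin k => f i.rev) := fun i j hij => hf _ _ (Fin.rev_lt_rev.mpr hij)
  have hg' : StrictMono (fun i : Fin k => g i.rev) := fun i j hij => hg _ _ (Fin.rev_lt_rev.mpr hij)
  have h := strictMono_eq hS hf' hg' (fun i => hfS _) (fun i => hgS _)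
  funext x
  have := congrFun h x.rev
  simpa using this

/-! ### Encoding and decoding valley permutations -/

variable (n) in
def Lcard (s : Fin n → Bool) : ℕ := (Finset.univ.filter fun v => s v = true).card

lemma hLcard (s : Fin n → Bool) :
    (Finset.univ.filter fun v => s v = true).card = Lcard n s := rfl

lemma Rcard_eq (s : Fin n → Bool) :
    (Finset.univ.filter fun v => ¬s v = true).card = n - Lcard n s := by
  have := Finset.card_filter_add_card_filter_not (s := (Finset.univ : Finset (Fin n)))
    (p := fun v => s v = true)
  simp only [Finset.card_univ, Fintype.card_fin] at this
  unfold Lcard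
  omega

lemma Lcard_le (s : Fin n → Bool) : Lcard n s ≤ n := by
  unfold Lcard
  have := Finset.card_filter_le (Finset.univ : Finset (Fin n)) (fun v => s v = true)
  simpa using this

variable (n) in
def decodeF (s : Fin n → Bool) (j : Fin n) : Fin n :=
  if h : (j : ℕ) < Lcard n s then
    (Finset.univ.filter fun v => s v = true).orderEmbOfFin (hLcard s)
      ⟨Lcard n s - 1 - (j : ℕ), by omega⟩
  else
    (Finset.univ.filter fun v => ¬s v = true).orderEmbOfFin (Rcard_eq s)
      ⟨(j : ℕ) - Lcard n s, by have := j.isLt; omega⟩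

lemma mem_L_of (s : Fin n → Bool) (i : Fin (Lcard n s)) :
    s ((Finset.univ.filter fun v => s v = true).orderEmbOfFin (hLcard s) i) = true := by
  have h := Finset.orderEmbOfFin_mem (Finset.univ.filter fun v => s v = true) (hLcard s) i
  exact (Finset.mem_filter.1 h).2

lemma mem_R_of (s : Fin n → Bool) (i : Fin (n - Lcard n s)) :
    s ((Finset.univ.filter fun v => ¬s v = true).orderEmbOfFin (Rcard_eq s) i) = false := by
  have h := Finset.orderEmbOfFin_mem (Finset.univ.filter fun v => ¬s v = true) (Rcard_eq s) i
  have h2 := (Finset.mem_filter.1 h).2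
  simpa using h2

lemma decodeF_mem_L (s : Fin n → Bool) (j : Fin n) (h : (j : ℕ) < Lcard n s) :
    s (decodeF n s j) = true := by
  rw [decodeF, dif_pos h]
  exact mem_L_of s _

lemma decodeF_mem_R (s : Fin n → Bool) (j : Fin n) (h : ¬(j : ℕ) < Lcard n s) :
    s (decodeF n s j) = false := by
  rw [decodeF, dif_neg h]
  exact mem_R_of s _

lemma decodeF_left_lt (s : Fin n → Bool) (a b : Fin n) (hab : (a : ℕ) < b)
    (hb : (b : ℕ) < Lcard n s) : decodeF n s b < decodeF n s a := by
  rw [decodeF, dif_pos hb, decodeF, dif_pos (show (a : ℕ) < Lcard n s by omega)]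
  apply ((Finset.univ.filter fun v => s v = true).orderEmbOfFin (hLcard s)).strictMono
  rw [Fin.mk_lt_mk]
  omega

lemma decodeF_right_lt (s : Fin n → Bool) (a b : Fin n) (ha : Lcard n s ≤ (a : ℕ))
    (hab : (a : ℕ) < b) : decodeF n s a < decodeF n s b := by
  rw [decodeF, dif_neg (show ¬(a : ℕ) < Lcard n s by omega),
      decodeF, dif_neg (show ¬(b : ℕ) < Lcard n s by omega)]
  apply ((Finset.univ.filter fun v => ¬s v = true).orderEmbOfFin (Rcard_eq s)).strictMono
  rw [Fin.mk_lt_mk]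
  omega

lemma decodeF_inj (s : Fin n → Bool) : Function.Injective (decodeF n s) := by
  intro a b hab
  by_cases ha : (a : ℕ) < Lcard n s <;> by_cases hb : (b : ℕ) < Lcard n s
  · rw [decodeF, dif_pos ha, decodeF, dif_pos hb] at hab
    have := ((Finset.univ.filter fun v => s v = true).orderEmbOfFin (hLcard s)).injective hab
    rw [Fin.mk.injEq] at this
    exact Fin.ext (by omega)
  · have h1 := decodeF_mem_L s a ha
    have h2 := decodeF_mem_R s b hb
    rw [hab, h2] at h1; exact absurd h1 (by simp)
  · have h1 := decodeF_mem_L s b hb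
    have h2 := decodeF_mem_R s a ha
    rw [hab, h1] at h2; exact absurd h2 (by simp)
  · rw [decodeF, dif_neg ha, decodeF, dif_neg hb] at hab
    have := ((Finset.univ.filter fun v => ¬s v = true).orderEmbOfFin (Rcard_eq s)).injective hab
    rw [Fin.mk.injEq] at this
    exact Fin.ext (by omega)

variable (n) in
noncomputable def decode (s : Fin n → Bool) : Equiv.Perm (Fin n) :=
  Equiv.ofBijective (decodeF n s) (Finite.injective_iff_bijective.1 (decodeF_inj s))

lemma decode_apply (s : Fin n → Bool) (j : Fin n) : decode n s j = decodeF n s j := rfl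

lemma decode_noPeak (s : Fin n → Bool) : sPeakSet n (decode n s) = ∅ := by
  rw [noPeak_iff]
  rintro j h1 h2 ⟨hasc, hdesc⟩
  by_cases hk : j < Lcard n s
  · have h := decodeF_left_lt s ⟨j - 1, by omega⟩ ⟨j, by omega⟩
      (show j - 1 < j by omega) (show j < Lcard n s from hk)
    have h2 := (word_lt_iff (decode n s) (show j - 1 < n by omega) (show j < n by omega)).1 hasc
    exact absurd h2 (asymm h)
  · have h := decodeF_right_lt s ⟨j, by omega⟩ ⟨j + 1, by omega⟩
      (show Lcard n s ≤ j by omega) (show j < j + 1 by omega)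
    have h2 := (word_lt_iff (decode n s) (show j + 1 < n by omega) (show j < n by omega)).1 hdesc
    exact absurd h2 (asymm h)

variable (n) in
def encode (hn : 0 < n) (σ : Equiv.Perm (Fin n)) : Fin n → Bool :=
  fun v => decide (σ.symm v ≤ σ.symm ⟨0, hn⟩)

lemma Lcard_pos (hn : 0 < n) (s : Fin n → Bool) (h0 : s ⟨0, hn⟩ = true) : 0 < Lcard n s := by
  rw [Lcard, Finset.card_pos]
  exact ⟨⟨0, hn⟩, by simp [h0]⟩

lemma decode_min (hn : 0 < n) (s : Fin n → Bool) (h0 : s ⟨0, hn⟩ = true)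
    (j : Fin n) (hj : (j : ℕ) = Lcard n s - 1) :
    decode n s j = ⟨0, hn⟩ := by
  have hk := Lcard_pos hn s h0
  have hkn := Lcard_le (n := n) s
  rw [decode_apply, decodeF, dif_pos (show (j : ℕ) < Lcard n s by omega)]
  have he : (⟨Lcard n s - 1 - (j : ℕ), by omega⟩ : Fin (Lcard n s)) = ⟨0, hk⟩ :=
    Fin.ext (show Lcard n s - 1 - (j : ℕ) = 0 by omega)
  rw [he, Finset.orderEmbOfFin_zero (hLcard s) hk]
  apply le_antisymm
  · exact Finset.min'_le _ _ (by simp [h0])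
  · apply Finset.le_min'
    intro y _
    exact (show (0 : ℕ) ≤ (y : ℕ) from Nat.zero_le _)

lemma encode_decode (hn : 0 < n) (s : Fin n → Bool) (h0 : s ⟨0, hn⟩ = true) :
    encode n hn (decode n s) = s := by
  have hk := Lcard_pos hn s h0
  have hkn := Lcard_le (n := n) s
  have hsymm0 : (decode n s).symm ⟨0, hn⟩ = ⟨Lcard n s - 1, by omega⟩ := by
    rw [Equiv.symm_apply_eq]
    exact (decode_min hn s h0 ⟨Lcard n s - 1, by omega⟩ rfl).symm
  funext v
  rw [encode, hsymm0]
  set j := (decode n s).symm v with hj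
  have hv : decodeF n s j = v := by
    rw [← decode_apply, hj, Equiv.apply_symm_apply]
  by_cases hjk : (j : ℕ) < Lcard n s
  · have hL := decodeF_mem_L s j hjk
    rw [hv] at hL
    rw [hL]
    simp only [decide_eq_true_eq]
    exact (show (j : ℕ) ≤ Lcard n s - 1 by omega)
  · have hR := decodeF_mem_R s j hjk
    rw [hv] at hR
    rw [hR]
    simp only [decide_eq_false_iff_not]
    exact (show ¬(j : ℕ) ≤ Lcard n s - 1 by omega)

lemma encode_card (hn : 0 < n) (σ : Equiv.Perm (Fin n)) :
    (Finset.univ.filter fun v => encode n hn σ v = true).card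
      = ((σ.symm ⟨0, hn⟩ : Fin n) : ℕ) + 1 := by
  set m := σ.symm ⟨0, hn⟩ with hm
  have himg : (Finset.univ.filter fun v => encode n hn σ v = true)
      = (Finset.Iic m).image σ := by
    ext v
    simp only [Finset.mem_filter, Finset.mem_univ, true_and, Finset.mem_image, Finset.mem_Iic,
      encode, decide_eq_true_eq]
    constructor
    · intro h; exact ⟨σ.symm v, h, by simp⟩
    · rintro ⟨j, hj, rfl⟩; simpa using hj
  rw [himg, Finset.card_image_of_injective _ σ.injective, Fin.card_Iic]

lemma encode_inj (hn : 0 < n) (σ σ' : Equiv.Perm (Fin n))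
    (hσ : sPeakSet n σ = ∅) (hσ' : sPeakSet n σ' = ∅)
    (he : encode n hn σ = encode n hn σ') : σ = σ' := by
  set m := ((σ.symm ⟨0, hn⟩ : Fin n) : ℕ) with hm
  have hmn : m < n := (σ.symm ⟨0, hn⟩).isLt
  have hmm : ((σ'.symm ⟨0, hn⟩ : Fin n) : ℕ) = m := by
    have h1 := encode_card hn σ
    have h2 := encode_card hn σ'
    rw [he] at h1
    omega
  have hcardL : (Finset.univ.filter fun v => encode n hn σ v = true).card = m + 1 :=
    encode_card hn σ
  have hFmem : ∀ τ : Equiv.Perm (Fin n), ((τ.symm ⟨0, hn⟩ : Fin n) : ℕ) = m →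
      ∀ i : Fin (m + 1), τ ⟨i, by omega⟩ ∈ (Finset.univ.filter fun v => encode n hn τ v = true) := by
    intro τ hτ i
    simp only [Finset.mem_filter, Finset.mem_univ, true_and, encode, decide_eq_true_eq,
      Equiv.symm_apply_apply]
    exact (show (i : ℕ) ≤ ((τ.symm ⟨0, hn⟩ : Fin n) : ℕ) from by have := i.isLt; omega)
  have hL : (fun i : Fin (m + 1) => σ ⟨i, by omega⟩) = (fun i : Fin (m + 1) => σ' ⟨i, by omega⟩) := by
    apply strictAnti_eq hcardL
    · intro i j hij
      exact (word_lt_iff σ (by have := j.isLt; omega) (by have := i.isLt; omega)).1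
        (left_chain σ hσ hn (a := (i : ℕ)) (b := (j : ℕ)) hij (by have := j.isLt; omega))
    · intro i j hij
      exact (word_lt_iff σ' (by have := j.isLt; omega) (by have := i.isLt; omega)).1
        (left_chain σ' hσ' hn (a := (i : ℕ)) (b := (j : ℕ)) hij (by rw [hmm]; have := j.isLt; omega))
    · exact hFmem σ rfl
    · intro i
      have h := hFmem σ' hmm i
      rwa [← he] at h
  have hcardR : (Finset.univ.filter fun v => ¬encode n hn σ v = true).card = n - (m + 1) := by
    have := Finset.card_filter_add_card_filter_not
      (s := (Finset.univ : Finset (Fin n))) (p := fun v => encode n hn σ v = true)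
    simp only [Finset.card_univ, Fintype.card_fin] at this
    have h1 := encode_card hn σ
    omega
  have hGmem : ∀ τ : Equiv.Perm (Fin n), ((τ.symm ⟨0, hn⟩ : Fin n) : ℕ) = m →
      ∀ i : Fin (n - (m + 1)),
        τ ⟨m + 1 + i, by have := i.isLt; omega⟩
          ∈ (Finset.univ.filter fun v => ¬encode n hn τ v = true) := by
    intro τ hτ i
    simp only [Finset.mem_filter, Finset.mem_univ, true_and, encode, decide_eq_true_eq,
      Equiv.symm_apply_apply]
    exact (show ¬(m + 1 + (i : ℕ) ≤ ((τ.symm ⟨0, hn⟩ : Fin n) : ℕ)) from by omega)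
  have hR : (fun i : Fin (n - (m + 1)) => σ ⟨m + 1 + i, by have := i.isLt; omega⟩)
      = (fun i : Fin (n - (m + 1)) => σ' ⟨m + 1 + i, by have := i.isLt; omega⟩) := by
    apply strictMono_eq hcardR
    · intro i j hij
      exact (word_lt_iff σ (by have := i.isLt; omega) (by have := j.isLt; omega)).1
        (right_chain σ hσ hn (a := m + 1 + (i : ℕ)) (b := m + 1 + (j : ℕ)) (by omega)
          (by have : (i : ℕ) < (j : ℕ) := hij; omega) (by have := j.isLt; omega))
    · intro i j hij
      exact (word_lt_iff σ' (by have := i.isLt; omega) (by have := j.isLt; omega)).1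
        (right_chain σ' hσ' hn (a := m + 1 + (i : ℕ)) (b := m + 1 + (j : ℕ)) (by rw [hmm]; omega)
          (by have : (i : ℕ) < (j : ℕ) := hij; omega) (by have := j.isLt; omega))
    · exact hGmem σ rfl
    · intro i
      have h := hGmem σ' hmm i
      rwa [← he] at h
  apply Equiv.ext
  intro x
  rcases Nat.lt_or_ge (x : ℕ) (m + 1) with hx | hx
  · have h := congrFun hL ⟨(x : ℕ), by omega⟩
    simpa using h
  · have h := congrFun hR ⟨(x : ℕ) - (m + 1), by have := x.isLt; omega⟩
    simp only at h
    have ex : (⟨m + 1 + ((x : ℕ) - (m + 1)), by have := x.isLt; omega⟩ : Fin n) = x :=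
      Fin.ext (show m + 1 + ((x : ℕ) - (m + 1)) = (x : ℕ) by omega)
    rwa [ex] at h

lemma PP_empty (hn : 0 < n) : PP n ∅ = 2 ^ (n - 1) := by
  rw [PP]
  have hbij : (Finset.univ.filter fun σ : Equiv.Perm (Fin n) => sPeakSet n σ = ∅).card
      = (Finset.univ.filter fun s : Fin n → Bool => s ⟨0, hn⟩ = true).card := by
    refine Finset.card_bij' (fun σ _ => encode n hn σ) (fun s _ => decode n s) ?_ ?_ ?_ ?_
    · intro σ hσ
      simp only [Finset.mem_filter, Finset.mem_univ, true_and]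
      simp [encode]
    · intro s hs
      simp only [Finset.mem_filter, Finset.mem_univ, true_and]
      exact decode_noPeak s
    · intro σ hσ
      simp only [Finset.mem_filter, Finset.mem_univ, true_and] at hσ
      have h0 : encode n hn σ ⟨0, hn⟩ = true := by simp [encode]
      exact encode_inj hn _ _ (decode_noPeak _) hσ (encode_decode hn (encode n hn σ) h0)
    · intro s hs
      simp only [Finset.mem_filter, Finset.mem_univ, true_and] at hs
      exact encode_decode hn s hs
  rw [hbij]
  have hflip : (Finset.univ.filter fun s : Fin n → Bool => s ⟨0, hn⟩ = true).card
      = (Finset.univ.filter fun s : Fin n → Bool => ¬s ⟨0, hn⟩ = true).card := by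
    refine Finset.card_bij' (fun s _ => Function.update s ⟨0, hn⟩ (!s ⟨0, hn⟩))
      (fun s _ => Function.update s ⟨0, hn⟩ (!s ⟨0, hn⟩)) ?_ ?_ ?_ ?_
    · intro s hs
      simp only [Finset.mem_filter, Finset.mem_univ, true_and] at hs ⊢
      simp [hs]
    · intro s hs
      simp only [Finset.mem_filter, Finset.mem_univ, true_and] at hs ⊢
      simp only [Bool.not_eq_true] at hs
      simp [hs]
    · intro s _
      funext v
      by_cases hv : v = ⟨0, hn⟩ <;> simp [Function.update, hv]
    · intro s _
      funext v
      by_cases hv : v = ⟨0, hn⟩ <;> simp [Function.update, hv]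
  have hsum : (Finset.univ.filter fun s : Fin n → Bool => s ⟨0, hn⟩ = true).card
      + (Finset.univ.filter fun s : Fin n → Bool => ¬s ⟨0, hn⟩ = true).card
      = (Finset.univ : Finset (Fin n → Bool)).card :=
    Finset.card_filter_add_card_filter_not
      (s := (Finset.univ : Finset (Fin n → Bool))) (p := fun s => s ⟨0, hn⟩ = true)
  have hcu : (Finset.univ : Finset (Fin n → Bool)).card = 2 ^ n := by
    simp [Finset.card_univ]
  have hpow : 2 ^ n = 2 * 2 ^ (n - 1) := by
    clear hbij hflip hsum hcu
    obtain ⟨k, hk⟩ : ∃ k, n = k + 1 := ⟨n - 1, by omega⟩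
    subst hk
    rw [Nat.add_sub_cancel, pow_succ]
    ring
  rw [hcu, hpow, hflip] at hsum
  have h2 : 2 * (Finset.univ.filter fun s : Fin n → Bool => ¬s ⟨0, hn⟩ = true).card
      = 2 * 2 ^ (n - 1) := by
    rw [two_mul]
    exact hsum
  rw [hflip]
  exact Nat.eq_of_mul_eq_mul_left (by norm_num) h2

/-! ### Reduction from signed to ordinary permutations -/

variable (n) in
def bvalOf (δ : Fin n → Bool) (v : Fin n) : ℤ :=
  if δ v then -(((v : ℕ) : ℤ) + 1) else ((v : ℕ) : ℤ) + 1

lemma bvalOf_inj (δ : Fin n → Bool) : Function.Injective (bvalOf n δ) := by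
  intro u v h
  rw [bvalOf, bvalOf] at h
  apply Fin.ext
  split_ifs at h <;> omega

variable (n) in
def rank (δ : Fin n → Bool) (v : Fin n) : Fin n :=
  ⟨(Finset.univ.filter fun u => bvalOf n δ u < bvalOf n δ v).card, by
    have hsub : (Finset.univ.filter fun u => bvalOf n δ u < bvalOf n δ v)
        ⊆ Finset.univ.erase v := by
      intro u hu
      simp only [Finset.mem_filter, Finset.mem_univ, true_and] at hu
      refine Finset.mem_erase.2 ⟨?_, Finset.mem_univ _⟩
      rintro rfl; exact absurd hu (lt_irrefl _)
    have hle := Finset.card_le_card hsub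
    rw [Finset.card_erase_of_mem (Finset.mem_univ v), Finset.card_univ, Fintype.card_fin] at hle
    have := v.pos
    omega⟩

lemma rank_lt (δ : Fin n → Bool) {u v : Fin n} (h : bvalOf n δ u < bvalOf n δ v) :
    rank n δ u < rank n δ v := by
  rw [rank, rank, Fin.mk_lt_mk]
  apply Finset.card_lt_card
  constructor
  · intro w hw
    simp only [Finset.mem_filter, Finset.mem_univ, true_and] at hw ⊢
    exact lt_trans hw h
  · intro hcon
    have h2 := hcon (Finset.mem_filter.2 ⟨Finset.mem_univ u, h⟩)
    simp only [Finset.mem_filter, Finset.mem_univ, true_and] at h2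
    exact absurd h2 (lt_irrefl _)

lemma rank_lt_iff (δ : Fin n → Bool) (u v : Fin n) :
    rank n δ u < rank n δ v ↔ bvalOf n δ u < bvalOf n δ v := by
  constructor
  · intro h
    rcases lt_trichotomy (bvalOf n δ u) (bvalOf n δ v) with h1 | h1 | h1
    · exact h1
    · rw [bvalOf_inj δ h1] at h; exact absurd h (lt_irrefl _)
    · exact absurd h (asymm (rank_lt δ h1))
  · exact rank_lt δ

lemma rank_inj (δ : Fin n → Bool) : Function.Injective (rank n δ) := by
  intro u v h
  apply bvalOf_inj δ
  rcases lt_trichotomy (bvalOf n δ u) (bvalOf n δ v) with h1 | h1 | h1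
  · exact absurd (rank_lt δ h1) (by rw [h]; exact lt_irrefl _)
  · exact h1
  · exact absurd (rank_lt δ h1) (by rw [h]; exact lt_irrefl _)

variable (n) in
noncomputable def rperm (δ : Fin n → Bool) : Equiv.Perm (Fin n) :=
  Equiv.ofBijective (rank n δ) (Finite.injective_iff_bijective.1 (rank_inj δ))

variable (n) in
def bword (δ : Fin n → Bool) (σ : Equiv.Perm (Fin n)) (j : ℕ) : ℤ :=
  if h : j < n then bvalOf n δ (σ ⟨j, h⟩) else 0

lemma bval_eq_bword (σ : Equiv.Perm (Fin n)) (ε : Fin n → Bool) (i : ℕ)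
    (h1 : 1 ≤ i) (h2 : i ≤ n) :
    bval n (σ, ε) i = bword n (ε ∘ σ.symm) σ (i - 1) := by
  rw [bval, dif_pos (show i - 1 < n by omega), bword, dif_pos (show i - 1 < n by omega), bvalOf]
  simp only [Function.comp_apply, Equiv.symm_apply_apply]
  split_ifs <;> ring

lemma bword_lt_iff (δ : Fin n → Bool) (σ : Equiv.Perm (Fin n)) {a b : ℕ}
    (ha : a < n) (hb : b < n) :
    bword n δ σ a < bword n δ σ b
      ↔ word (σ.trans (rperm n δ)) a < word (σ.trans (rperm n δ)) b := by
  rw [bword, dif_pos ha, bword, dif_pos hb,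
      word_eq _ ha, word_eq _ hb, ← rank_lt_iff]
  exact Iff.rfl

lemma bPeak_eq_sPeak (σ : Equiv.Perm (Fin n)) (ε : Fin n → Bool) :
    bPeakSet n (σ, ε) = sPeakSet n (σ.trans (rperm n (ε ∘ σ.symm))) := by
  set δ := ε ∘ σ.symm with hδ
  set τ := σ.trans (rperm n δ) with hτ
  rw [bPeakSet, sPeakSet]
  apply Finset.filter_congr
  intro i hi
  rw [Finset.mem_Icc] at hi
  rw [bval_eq_bword σ ε (i - 1) (by omega) (by omega),
      bval_eq_bword σ ε i (by omega) (by omega),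
      bval_eq_bword σ ε (i + 1) (by omega) (by omega),
      sval_eq_word τ (i - 1) (by omega) (by omega),
      sval_eq_word τ i (by omega) (by omega),
      sval_eq_word τ (i + 1) (by omega) (by omega),
      castlt, castlt]
  exact and_congr (bword_lt_iff δ σ (by omega) (by omega))
    (bword_lt_iff δ σ (by omega) (by omega))

lemma PB_eq : PB n ∅ = 2 ^ n * PP n ∅ := by
  rw [PB]
  have hcard : (Finset.univ.filter fun π : Equiv.Perm (Fin n) × (Fin n → Bool) =>
        bPeakSet n π = ∅).card
      = (Finset.univ.filter fun p : (Fin n → Bool) × Equiv.Perm (Fin n) =>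
        sPeakSet n p.2 = ∅).card := by
    refine Finset.card_bij
      (fun π _ => ((π.2 ∘ π.1.symm : Fin n → Bool), π.1.trans (rperm n (π.2 ∘ π.1.symm))))
      ?_ ?_ ?_
    · rintro ⟨σ, ε⟩ hπ
      simp only [Finset.mem_filter, Finset.mem_univ, true_and] at hπ ⊢
      rw [← bPeak_eq_sPeak]
      exact hπ
    · rintro ⟨σ, ε⟩ h1 ⟨σ', ε'⟩ h2 heq
      simp only [Prod.mk.injEq] at heq
      obtain ⟨hδ, hτ⟩ := heq
      have hσ : σ = σ' := by
        have heq2 : σ.trans (rperm n (ε ∘ σ.symm)) = σ'.trans (rperm n (ε ∘ σ.symm)) := by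
          rw [hτ, hδ]
        apply Equiv.ext
        intro x
        have h3 := congrArg (fun e : Equiv.Perm (Fin n) =>
          (rperm n (ε ∘ σ.symm)).symm (e x)) heq2
        simpa using h3
      subst hσ
      have hε : ε = ε' := by
        funext x
        have h4 := congrFun hδ (σ x)
        simpa using h4
      rw [hε]
    · rintro ⟨δ, τ⟩ hp
      simp only [Finset.mem_filter, Finset.mem_univ, true_and] at hp
      refine ⟨(τ.trans (rperm n δ).symm, δ ∘ (τ.trans (rperm n δ).symm)), ?_, ?_⟩
      · simp only [Finset.mem_filter, Finset.mem_univ, true_and]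
        have hδeq : ((δ ∘ (τ.trans (rperm n δ).symm)) ∘ (τ.trans (rperm n δ).symm).symm) = δ := by
          funext x; simp
        rw [bPeak_eq_sPeak, hδeq]
        have htr : (τ.trans (rperm n δ).symm).trans (rperm n δ) = τ := by
          apply Equiv.ext; intro x; simp
        rw [htr]
        exact hp
      · simp only [Prod.mk.injEq]
        have hδeq : ((δ ∘ (τ.trans (rperm n δ).symm)) ∘ (τ.trans (rperm n δ).symm).symm) = δ := by
          funext x; simp
        refine ⟨hδeq, ?_⟩
        rw [hδeq]
        apply Equiv.ext; intro x; simp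
  rw [hcard]
  have hprod : (Finset.univ.filter fun p : (Fin n → Bool) × Equiv.Perm (Fin n) =>
        sPeakSet n p.2 = ∅)
      = Finset.univ ×ˢ (Finset.univ.filter fun τ : Equiv.Perm (Fin n) => sPeakSet n τ = ∅) := by
    ext p
    simp [Finset.mem_product]
  rw [hprod, Finset.card_product, PP]
  congr 1
  simp [Finset.card_univ]

end Stmt2Aux

/-- the number of signed permutations in `B_n` with no peaks is `2^(2n-1)`. -/
theorem stmt2 (n : ℕ) (hn : 1 ≤ n) : PB n ∅ = 2 ^ (2 * n - 1) := by
  rw [Stmt2Aux.PB_eq, Stmt2Aux.PP_empty hn, ← pow_add]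
  congr 1
  omega
end

section
/- For any admissible set S with s elements and maximum element m, the number of signed permutations in B_n with peak set S is p(n)·2^{2n-s-1}, where p(n) is an integer-valued polynomial in n of degree m-1 (degree 0 if S is empty) depending only on S. -/
open Finset

section Aux
open Equiv Function

lemma sval_eq (n : ℕ) (π : Equiv.Perm (Fin n)) (i : ℕ) (h : i - 1 < n) :
    sval n π i = ((π ⟨i - 1, h⟩ : ℕ) : ℤ) + 1 := by
  rw [sval, dif_pos h]

lemma sPeak_consec (n : ℕ) (π : Equiv.Perm (Fin n)) (i : ℕ)
    (h1 : i ∈ sPeakSet n π) (h2 : i + 1 ∈ sPeakSet n π) : False := by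
  simp only [sPeakSet, mem_filter, mem_Icc] at h1 h2
  have a := h1.2.2
  have b := h2.2.1
  simp only [Nat.add_sub_cancel] at b
  omega

/-! ### The signed-to-unsigned bijection -/

def vmapz (n : ℕ) (s : Fin n → Bool) (j : Fin n) : ℤ :=
  if s j then -((j : ℤ) + 1) else (j : ℤ) + 1

lemma vmapz_natAbs (n : ℕ) (s : Fin n → Bool) (j : Fin n) :
    (vmapz n s j).natAbs = (j : ℕ) + 1 := by
  unfold vmapz; split <;> omega

lemma vmapz_inj (n : ℕ) (s : Fin n → Bool) : Injective (vmapz n s) := by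
  intro j k h
  have := vmapz_natAbs n s j
  rw [h, vmapz_natAbs] at this
  exact Fin.ext (by omega)

def sgnSet (n : ℕ) (s : Fin n → Bool) : Finset ℤ := Finset.univ.image (vmapz n s)

lemma sgnSet_card (n : ℕ) (s : Fin n → Bool) : (sgnSet n s).card = n := by
  rw [sgnSet, card_image_of_injective _ (vmapz_inj n s), card_univ, Fintype.card_fin]

def sgnEmb (n : ℕ) (s : Fin n → Bool) : Fin n ↪o ℤ :=
  (sgnSet n s).orderEmbOfFin (sgnSet_card n s)

lemma sgnEmb_mem (n : ℕ) (s : Fin n → Bool) (i : Fin n) :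
    ∃ j : Fin n, vmapz n s j = sgnEmb n s i := by
  have h := Finset.orderEmbOfFin_mem (sgnSet n s) (sgnSet_card n s) i
  simp only [sgnSet, mem_image] at h
  obtain ⟨j, _, hj⟩ := h
  exact ⟨j, hj⟩

lemma sgnEmb_natAbs_lt (n : ℕ) (s : Fin n → Bool) (i : Fin n) :
    (sgnEmb n s i).natAbs - 1 < n := by
  obtain ⟨j, hj⟩ := sgnEmb_mem n s i
  rw [← hj, vmapz_natAbs]
  omega

def Fσ (n : ℕ) (p : Equiv.Perm (Fin n) × (Fin n → Bool)) : Fin n → Fin n :=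
  fun i => ⟨(sgnEmb n p.2 (p.1 i)).natAbs - 1, sgnEmb_natAbs_lt n p.2 (p.1 i)⟩

lemma Fσ_bij (n : ℕ) (p : Equiv.Perm (Fin n) × (Fin n → Bool)) : Bijective (Fσ n p) := by
  rw [← Finite.injective_iff_bijective]
  intro i i' h
  obtain ⟨j, hj⟩ := sgnEmb_mem n p.2 (p.1 i)
  obtain ⟨j', hj'⟩ := sgnEmb_mem n p.2 (p.1 i')
  have hji : (Fσ n p i : ℕ) = (j : ℕ) := by simp [Fσ, ← hj, vmapz_natAbs]
  have hji' : (Fσ n p i' : ℕ) = (j' : ℕ) := by simp [Fσ, ← hj', vmapz_natAbs]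
  have hjj : j = j' := Fin.ext (by rw [← hji, ← hji', h])
  have : sgnEmb n p.2 (p.1 i) = sgnEmb n p.2 (p.1 i') := by rw [← hj, ← hj', hjj]
  exact p.1.injective ((sgnEmb n p.2).injective this)

noncomputable def Fmap (n : ℕ) (p : Equiv.Perm (Fin n) × (Fin n → Bool)) :
    Equiv.Perm (Fin n) × (Fin n → Bool) :=
  (Equiv.ofBijective (Fσ n p) (Fσ_bij n p), fun i => decide (sgnEmb n p.2 (p.1 i) < 0))

lemma bval_Fmap (n : ℕ) (p : Equiv.Perm (Fin n) × (Fin n → Bool)) (i : ℕ) (h : i - 1 < n) :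
    bval n (Fmap n p) i = sgnEmb n p.2 (p.1 ⟨i - 1, h⟩) := by
  rw [bval, dif_pos h]
  obtain ⟨j, hj⟩ := sgnEmb_mem n p.2 (p.1 ⟨i - 1, h⟩)
  have h1 : ((Fmap n p).1 ⟨i - 1, h⟩ : ℕ) = (j : ℕ) := by
    simp [Fmap, Fσ, ← hj, vmapz_natAbs]
  have h2 : (Fmap n p).2 ⟨i - 1, h⟩ = decide (sgnEmb n p.2 (p.1 ⟨i - 1, h⟩) < 0) := rfl
  rw [h1, h2, ← hj]
  simp only [decide_eq_true_eq]
  by_cases hs : p.2 j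
  · rw [if_pos (by simp only [vmapz, if_pos hs]; omega)]
    simp [vmapz, hs]
  · rw [if_neg (by simp only [vmapz, if_neg hs]; omega)]
    simp [vmapz, hs]

lemma bPeakSet_Fmap (n : ℕ) (p : Equiv.Perm (Fin n) × (Fin n → Bool)) :
    bPeakSet n (Fmap n p) = sPeakSet n p.1 := by
  unfold bPeakSet sPeakSet
  apply filter_congr
  intro i hi
  rw [mem_Icc] at hi
  have h1 : i - 1 - 1 < n := by omega
  have h2 : i - 1 < n := by omega
  have h3 : i + 1 - 1 < n := by omega
  rw [bval_Fmap n p (i-1) h1, bval_Fmap n p i h2, bval_Fmap n p (i+1) h3,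
    sval_eq n p.1 (i-1) h1, sval_eq n p.1 i h2, sval_eq n p.1 (i+1) h3]
  have e : ∀ (a b : Fin n), (sgnEmb n p.2 (p.1 a) < sgnEmb n p.2 (p.1 b) ↔
      ((p.1 a : ℕ) : ℤ) + 1 < ((p.1 b : ℕ) : ℤ) + 1) := by
    intro a b
    rw [OrderEmbedding.lt_iff_lt]
    rw [Fin.lt_iff_val_lt_val]
    omega
  rw [e, e]

end Aux

section Aux2
open Equiv Function

lemma neg_mem_sgnSet_iff (n : ℕ) (s : Fin n → Bool) (j : Fin n) :
    (-((j:ℤ)+1) ∈ sgnSet n s) ↔ s j = true := by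
  constructor
  · intro h
    simp only [sgnSet, mem_image, mem_univ, true_and] at h
    obtain ⟨k, hk⟩ := h
    have hn := vmapz_natAbs n s k
    rw [hk] at hn
    have : (k:ℕ) = (j:ℕ) := by omega
    have hkj : k = j := Fin.ext this
    subst hkj
    by_contra hs
    simp only [Bool.not_eq_true] at hs
    simp [vmapz, hs] at hk
    omega
  · intro h
    simp only [sgnSet, mem_image, mem_univ, true_and]
    exact ⟨j, by simp [vmapz, h]⟩

lemma sgnSet_mem_iff_emb (n : ℕ) (s : Fin n → Bool) (π : Equiv.Perm (Fin n)) (x : ℤ) :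
    x ∈ sgnSet n s ↔ ∃ i, sgnEmb n s (π i) = x := by
  constructor
  · intro hx
    have hx' : x ∈ Set.range (sgnEmb n s) := by
      rw [sgnEmb, Finset.range_orderEmbOfFin]
      exact hx
    obtain ⟨i, hi⟩ := hx'
    exact ⟨π.symm i, by rwa [Equiv.apply_symm_apply]⟩
  · rintro ⟨i, rfl⟩
    exact Finset.orderEmbOfFin_mem _ _ _

lemma Fmap_inj (n : ℕ) : Injective (Fmap n) := by
  intro p q h
  have hv : ∀ i : Fin n, sgnEmb n p.2 (p.1 i) = sgnEmb n q.2 (q.1 i) := by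
    intro i
    have hip : ((i : ℕ) + 1) - 1 < n := by omega
    have h1 := bval_Fmap n p ((i:ℕ)+1) hip
    have h2 := bval_Fmap n q ((i:ℕ)+1) hip
    have hi' : (⟨(i:ℕ)+1-1, hip⟩ : Fin n) = i := Fin.ext (by simp)
    rw [hi'] at h1 h2
    rw [← h1, ← h2, h]
  have hset : sgnSet n p.2 = sgnSet n q.2 := by
    ext x
    rw [sgnSet_mem_iff_emb n p.2 p.1, sgnSet_mem_iff_emb n q.2 q.1]
    exact exists_congr fun i => by rw [hv i]
  have hs2 : p.2 = q.2 := by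
    funext j
    have hiff : (p.2 j = true) ↔ (q.2 j = true) := by
      rw [← neg_mem_sgnSet_iff n p.2 j, ← neg_mem_sgnSet_iff n q.2 j, hset]
    cases hp : p.2 j <;> cases hq : q.2 j <;> simp_all
  have hs1 : p.1 = q.1 := by
    apply Equiv.ext
    intro i
    apply (sgnEmb n p.2).injective
    rw [hv i, hs2]
  exact Prod.ext hs1 hs2

lemma PB_eq_two_pow_mul_PP (n : ℕ) (S : Finset ℕ) : PB n S = 2 ^ n * PP n S := by
  classical
  have hbij : Bijective (Fmap n) := Finite.injective_iff_bijective.mp (Fmap_inj n)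
  let e : (Equiv.Perm (Fin n) × (Fin n → Bool)) ≃ (Equiv.Perm (Fin n) × (Fin n → Bool)) :=
    Equiv.ofBijective (Fmap n) hbij
  have himg : (univ.filter fun p : Equiv.Perm (Fin n) × (Fin n → Bool) => bPeakSet n p = S) =
      Finset.map e.toEmbedding
        (univ.filter fun p : Equiv.Perm (Fin n) × (Fin n → Bool) => sPeakSet n p.1 = S) := by
    ext q
    simp only [Finset.mem_map, mem_filter, mem_univ, true_and, Equiv.coe_toEmbedding]
    constructor
    · intro hq
      refine ⟨e.symm q, ?_, e.apply_symm_apply q⟩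
      have he : Fmap n (e.symm q) = q := e.apply_symm_apply q
      rw [← he, bPeakSet_Fmap] at hq
      exact hq
    · rintro ⟨p, hp, rfl⟩
      have he : e p = Fmap n p := rfl
      rw [he, bPeakSet_Fmap]
      exact hp
  rw [PB, himg, Finset.card_map]
  have hprod : (univ.filter fun p : Equiv.Perm (Fin n) × (Fin n → Bool) => sPeakSet n p.1 = S) =
      (univ.filter fun π : Equiv.Perm (Fin n) => sPeakSet n π = S) ×ˢ
        (univ : Finset (Fin n → Bool)) := by
    rw [← Finset.univ_product_univ, Finset.filter_product_left (fun π : Equiv.Perm (Fin n) => sPeakSet n π = S)]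
  rw [hprod, Finset.card_product, PP, card_univ, Fintype.card_fun]
  simp [mul_comm]

end Aux2

section Split
open Equiv Function

lemma compl_card {n a b : ℕ} (h : a + b = n) (A : Finset (Fin n)) (hA : A.card = a) :
    Aᶜ.card = b := by
  rw [Finset.card_compl, hA, Fintype.card_fin]; omega

def hfun {n a b : ℕ} (h : a + b = n) (A : Finset (Fin n)) (hA : A.card = a)
    (σ : Equiv.Perm (Fin a)) (τ : Equiv.Perm (Fin b)) : Fin n → Fin n := fun i =>
  if hi : (i : ℕ) < a then A.orderEmbOfFin hA (σ ⟨i, hi⟩)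
  else Aᶜ.orderEmbOfFin (compl_card h A hA) (τ ⟨(i : ℕ) - a, by have := i.isLt; omega⟩)

lemma hfun_inj {n a b : ℕ} (h : a + b = n) (A : Finset (Fin n)) (hA : A.card = a)
    (σ : Equiv.Perm (Fin a)) (τ : Equiv.Perm (Fin b)) : Injective (hfun h A hA σ τ) := by
  intro i j hij
  unfold hfun at hij
  by_cases hi : (i : ℕ) < a <;> by_cases hj : (j : ℕ) < a
  · rw [dif_pos hi, dif_pos hj] at hij
    have h1 := σ.injective ((A.orderEmbOfFin hA).injective hij)
    exact Fin.ext (by have := congrArg Fin.val h1; simpa using this)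
  · rw [dif_pos hi, dif_neg hj] at hij
    exfalso
    have m1 : A.orderEmbOfFin hA (σ ⟨i, hi⟩) ∈ A := Finset.orderEmbOfFin_mem _ _ _
    rw [hij] at m1
    have m2 := Finset.orderEmbOfFin_mem Aᶜ (compl_card h A hA)
      (τ ⟨(j : ℕ) - a, by have := j.isLt; omega⟩)
    rw [Finset.mem_compl] at m2
    exact m2 m1
  · rw [dif_neg hi, dif_pos hj] at hij
    exfalso
    have m1 : A.orderEmbOfFin hA (σ ⟨j, hj⟩) ∈ A := Finset.orderEmbOfFin_mem _ _ _
    rw [← hij] at m1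
    have m2 := Finset.orderEmbOfFin_mem Aᶜ (compl_card h A hA)
      (τ ⟨(i : ℕ) - a, by have := i.isLt; omega⟩)
    rw [Finset.mem_compl] at m2
    exact m2 m1
  · rw [dif_neg hi, dif_neg hj] at hij
    have h1 := τ.injective ((Aᶜ.orderEmbOfFin (compl_card h A hA)).injective hij)
    have h2 : (i : ℕ) - a = (j : ℕ) - a := congrArg Fin.val h1
    exact Fin.ext (by omega)

noncomputable def hperm {n a b : ℕ} (h : a + b = n) (A : Finset (Fin n)) (hA : A.card = a)
    (σ : Equiv.Perm (Fin a)) (τ : Equiv.Perm (Fin b)) : Equiv.Perm (Fin n) :=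
  Equiv.ofBijective (hfun h A hA σ τ)
    (Finite.injective_iff_bijective.mp (hfun_inj h A hA σ τ))

lemma hperm_apply_lt {n a b : ℕ} (h : a + b = n) (A : Finset (Fin n)) (hA : A.card = a)
    (σ : Equiv.Perm (Fin a)) (τ : Equiv.Perm (Fin b)) (i : Fin n) (hi : (i : ℕ) < a) :
    hperm h A hA σ τ i = A.orderEmbOfFin hA (σ ⟨i, hi⟩) := by
  show hfun h A hA σ τ i = _
  rw [hfun, dif_pos hi]

lemma hperm_apply_ge {n a b : ℕ} (h : a + b = n) (A : Finset (Fin n)) (hA : A.card = a)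
    (σ : Equiv.Perm (Fin a)) (τ : Equiv.Perm (Fin b)) (i : Fin n) (hi : ¬ (i : ℕ) < a) :
    hperm h A hA σ τ i =
      Aᶜ.orderEmbOfFin (compl_card h A hA) (τ ⟨(i : ℕ) - a, by have := i.isLt; omega⟩) := by
  show hfun h A hA σ τ i = _
  rw [hfun, dif_neg hi]

lemma sval_hperm_lt {n a b : ℕ} (h : a + b = n) (A : Finset (Fin n)) (hA : A.card = a)
    (σ : Equiv.Perm (Fin a)) (τ : Equiv.Perm (Fin b)) (j : ℕ) (hj : j - 1 < a) :
    sval n (hperm h A hA σ τ) j =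
      ((A.orderEmbOfFin hA (σ ⟨j - 1, hj⟩) : Fin n) : ℤ) + 1 := by
  have hjn : j - 1 < n := by omega
  rw [sval_eq n _ j hjn, hperm_apply_lt h A hA σ τ ⟨j - 1, hjn⟩ hj]

lemma sval_hperm_ge {n a b : ℕ} (h : a + b = n) (A : Finset (Fin n)) (hA : A.card = a)
    (σ : Equiv.Perm (Fin a)) (τ : Equiv.Perm (Fin b)) (j : ℕ) (hj1 : a + 1 ≤ j) (hj2 : j ≤ n)
    (hjb : j - 1 - a < b) :
    sval n (hperm h A hA σ τ) j =
      ((Aᶜ.orderEmbOfFin (compl_card h A hA) (τ ⟨j - 1 - a, hjb⟩) : Fin n) : ℤ) + 1 := by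
  have hjn : j - 1 < n := by omega
  rw [sval_eq n _ j hjn, hperm_apply_ge h A hA σ τ ⟨j - 1, hjn⟩ (by simp; omega)]

lemma sval_cmp_prefix {n a b : ℕ} (h : a + b = n) (A : Finset (Fin n)) (hA : A.card = a)
    (σ : Equiv.Perm (Fin a)) (τ : Equiv.Perm (Fin b)) (x y : ℕ)
    (hx1 : 1 ≤ x) (hx2 : x ≤ a) (hy1 : 1 ≤ y) (hy2 : y ≤ a) :
    (sval n (hperm h A hA σ τ) x < sval n (hperm h A hA σ τ) y ↔ sval a σ x < sval a σ y) := by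
  have hxa : x - 1 < a := by omega
  have hya : y - 1 < a := by omega
  rw [sval_hperm_lt h A hA σ τ x hxa, sval_hperm_lt h A hA σ τ y hya,
    sval_eq a σ x hxa, sval_eq a σ y hya]
  have : (A.orderEmbOfFin hA (σ ⟨x-1, hxa⟩) : Fin n) < A.orderEmbOfFin hA (σ ⟨y-1, hya⟩) ↔
      σ ⟨x-1, hxa⟩ < σ ⟨y-1, hya⟩ := OrderEmbedding.lt_iff_lt _
  rw [Fin.lt_iff_val_lt_val, Fin.lt_iff_val_lt_val] at this
  omega

lemma sval_cmp_suffix {n a b : ℕ} (h : a + b = n) (A : Finset (Fin n)) (hA : A.card = a)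
    (σ : Equiv.Perm (Fin a)) (τ : Equiv.Perm (Fin b)) (x y : ℕ)
    (hx1 : a + 1 ≤ x) (hx2 : x ≤ n) (hy1 : a + 1 ≤ y) (hy2 : y ≤ n) :
    (sval n (hperm h A hA σ τ) x < sval n (hperm h A hA σ τ) y ↔
      sval b τ (x - a) < sval b τ (y - a)) := by
  have hxb : x - 1 - a < b := by omega
  have hyb : y - 1 - a < b := by omega
  have hxb' : (x - a) - 1 < b := by omega
  have hyb' : (y - a) - 1 < b := by omega
  rw [sval_hperm_ge h A hA σ τ x hx1 hx2 hxb, sval_hperm_ge h A hA σ τ y hy1 hy2 hyb,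
    sval_eq b τ (x - a) hxb', sval_eq b τ (y - a) hyb']
  have hix : (⟨(x - a) - 1, hxb'⟩ : Fin b) = ⟨x - 1 - a, hxb⟩ := by
    apply Fin.ext; show (x - a) - 1 = x - 1 - a; omega
  have hiy : (⟨(y - a) - 1, hyb'⟩ : Fin b) = ⟨y - 1 - a, hyb⟩ := by
    apply Fin.ext; show (y - a) - 1 = y - 1 - a; omega
  rw [hix, hiy]
  have : (Aᶜ.orderEmbOfFin (compl_card h A hA) (τ ⟨x-1-a, hxb⟩) : Fin n) <
      Aᶜ.orderEmbOfFin (compl_card h A hA) (τ ⟨y-1-a, hyb⟩) ↔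
      τ ⟨x-1-a, hxb⟩ < τ ⟨y-1-a, hyb⟩ := OrderEmbedding.lt_iff_lt _
  rw [Fin.lt_iff_val_lt_val, Fin.lt_iff_val_lt_val] at this
  omega

end Split

section Split2
open Equiv Function

lemma peak_hperm_prefix {n a b : ℕ} (h : a + b = n) (A : Finset (Fin n)) (hA : A.card = a)
    (σ : Equiv.Perm (Fin a)) (τ : Equiv.Perm (Fin b)) (i : ℕ) (h2 : 2 ≤ i) (hia : i + 1 ≤ a) :
    (i ∈ sPeakSet n (hperm h A hA σ τ) ↔ i ∈ sPeakSet a σ) := by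
  unfold sPeakSet
  rw [mem_filter, mem_filter, mem_Icc, mem_Icc]
  have hmem : (2 ≤ i ∧ i ≤ n - 1) ↔ (2 ≤ i ∧ i ≤ a - 1) := by omega
  rw [hmem, sval_cmp_prefix h A hA σ τ (i-1) i (by omega) (by omega) (by omega) (by omega),
    sval_cmp_prefix h A hA σ τ (i+1) i (by omega) (by omega) (by omega) (by omega)]

lemma peak_hperm_suffix {n a b : ℕ} (h : a + b = n) (A : Finset (Fin n)) (hA : A.card = a)
    (σ : Equiv.Perm (Fin a)) (τ : Equiv.Perm (Fin b)) (i : ℕ) (h2 : a + 2 ≤ i) (hin : i + 1 ≤ n) :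
    (i ∈ sPeakSet n (hperm h A hA σ τ) ↔ i - a ∈ sPeakSet b τ) := by
  unfold sPeakSet
  rw [mem_filter, mem_filter, mem_Icc, mem_Icc]
  have hmem : (2 ≤ i ∧ i ≤ n - 1) ↔ (2 ≤ i - a ∧ i - a ≤ b - 1) := by omega
  rw [hmem, sval_cmp_suffix h A hA σ τ (i-1) i (by omega) (by omega) (by omega) (by omega),
    sval_cmp_suffix h A hA σ τ (i+1) i (by omega) (by omega) (by omega) (by omega)]
  have e1 : i - 1 - a = (i - a) - 1 := by omega
  have e2 : i + 1 - a = (i - a) + 1 := by omega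
  rw [e1, e2]

lemma mem_iff_hperm {n a b : ℕ} (h : a + b = n) (A : Finset (Fin n)) (hA : A.card = a)
    (σ : Equiv.Perm (Fin a)) (τ : Equiv.Perm (Fin b)) (v : Fin n) :
    v ∈ A ↔ ∃ i : Fin a, hperm h A hA σ τ ⟨(i : ℕ), by have := i.isLt; omega⟩ = v := by
  constructor
  · intro hv
    have hv' : v ∈ Set.range (A.orderEmbOfFin hA) := by
      rw [Finset.range_orderEmbOfFin]; exact hv
    obtain ⟨k, hk⟩ := hv'
    refine ⟨σ.symm k, ?_⟩
    rw [hperm_apply_lt h A hA σ τ _ (by simpa using (σ.symm k).isLt)]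
    have : (⟨((σ.symm k : Fin a) : ℕ), _⟩ : Fin a) = σ.symm k := Fin.ext rfl
    rw [show (⟨((σ.symm k : Fin a) : ℕ), (σ.symm k).isLt⟩ : Fin a) = σ.symm k from Fin.ext rfl]
    rw [Equiv.apply_symm_apply]
    exact hk
  · rintro ⟨i, rfl⟩
    rw [hperm_apply_lt h A hA σ τ _ (by simpa using i.isLt)]
    exact Finset.orderEmbOfFin_mem _ _ _

lemma split_count {n a b : ℕ} (h : a + b = n)
    (Q1 : Equiv.Perm (Fin a) → Prop) [DecidablePred Q1]
    (Q2 : Equiv.Perm (Fin b) → Prop) [DecidablePred Q2]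
    (P : Equiv.Perm (Fin n) → Prop) [DecidablePred P]
    (hP : ∀ (A : Finset (Fin n)) (hA : A.card = a) (σ : Equiv.Perm (Fin a))
      (τ : Equiv.Perm (Fin b)), (P (hperm h A hA σ τ) ↔ Q1 σ ∧ Q2 τ)) :
    (univ.filter P).card = n.choose a * (univ.filter Q1).card * (univ.filter Q2).card := by
  classical
  let G : ({A : Finset (Fin n) // A.card = a} × Equiv.Perm (Fin a) × Equiv.Perm (Fin b)) →
      Equiv.Perm (Fin n) := fun x => hperm h x.1.1 x.1.2 x.2.1 x.2.2
  have hGinj : Injective G := by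
    rintro ⟨⟨A, hA⟩, σ, τ⟩ ⟨⟨A', hA'⟩, σ', τ'⟩ hxy
    simp only [G] at hxy
    have hAA : A = A' := by
      ext v
      rw [mem_iff_hperm h A hA σ τ v, mem_iff_hperm h A' hA' σ' τ' v, hxy]
    subst hAA
    have hpe : hA = hA' := Subsingleton.elim _ _
    subst hpe
    have hσ : σ = σ' := by
      apply Equiv.ext
      intro k
      apply (A.orderEmbOfFin hA).injective
      have h1 := DFunLike.congr_fun hxy (⟨(k : ℕ), by have := k.isLt; omega⟩ : Fin n)
      rw [hperm_apply_lt h A hA σ τ _ (by simpa using k.isLt),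
        hperm_apply_lt h A hA σ' τ' _ (by simpa using k.isLt)] at h1
      rwa [show (⟨((k : Fin a) : ℕ), k.isLt⟩ : Fin a) = k from Fin.ext rfl] at h1
    have hτ : τ = τ' := by
      apply Equiv.ext
      intro k
      apply (Aᶜ.orderEmbOfFin (compl_card h A hA)).injective
      have h1 := DFunLike.congr_fun hxy (⟨a + (k : ℕ), by have := k.isLt; omega⟩ : Fin n)
      rw [hperm_apply_ge h A hA σ τ _ (by simp),
        hperm_apply_ge h A hA σ' τ' _ (by simp)] at h1
      simp only [Fin.val_mk, Nat.add_sub_cancel_left, Fin.eta] at h1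
      exact h1
    simp [hσ, hτ]
  have hcard : Fintype.card
      ({A : Finset (Fin n) // A.card = a} × Equiv.Perm (Fin a) × Equiv.Perm (Fin b)) =
      Fintype.card (Equiv.Perm (Fin n)) := by
    rw [Fintype.card_prod, Fintype.card_prod, Fintype.card_finset_len, Fintype.card_perm,
      Fintype.card_perm, Fintype.card_perm, Fintype.card_fin, Fintype.card_fin, Fintype.card_fin]
    have hc := Nat.choose_mul_factorial_mul_factorial (show a ≤ n by omega)
    rw [show n - a = b by omega] at hc
    rw [← hc]; ring
  have hGbij : Bijective G := (Fintype.bijective_iff_injective_and_card G).mpr ⟨hGinj, hcard⟩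
  let eG := Equiv.ofBijective G hGbij
  have himg : (univ.filter P) = Finset.map eG.toEmbedding
      (univ.filter fun x : {A : Finset (Fin n) // A.card = a} ×
        Equiv.Perm (Fin a) × Equiv.Perm (Fin b) => Q1 x.2.1 ∧ Q2 x.2.2) := by
    ext π
    simp only [Finset.mem_map, mem_filter, mem_univ, true_and, Equiv.coe_toEmbedding]
    constructor
    · intro hπ
      refine ⟨eG.symm π, ?_, eG.apply_symm_apply π⟩
      have he : G (eG.symm π) = π := eG.apply_symm_apply π
      rw [← he] at hπ
      simp only [G] at hπ
      exact (hP (eG.symm π).1.1 (eG.symm π).1.2 (eG.symm π).2.1 (eG.symm π).2.2).mp hπ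
    · rintro ⟨x, hx, rfl⟩
      show P (G x)
      simp only [G]
      exact (hP x.1.1 x.1.2 x.2.1 x.2.2).mpr hx
  rw [himg, Finset.card_map]
  rw [← Finset.univ_product_univ,
    Finset.filter_product_right (fun y : Equiv.Perm (Fin a) × Equiv.Perm (Fin b) =>
      Q1 y.1 ∧ Q2 y.2), Finset.card_product, ← Finset.univ_product_univ,
    Finset.filter_product Q1 Q2, Finset.card_product, card_univ, Fintype.card_finset_len,
    Fintype.card_fin, mul_assoc]

end Split2

section Valley
open Equiv Function

lemma sval_lt_sval_iff (n : ℕ) (π : Equiv.Perm (Fin n)) (x y : ℕ) (hx : x - 1 < n)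
    (hy : y - 1 < n) :
    sval n π x < sval n π y ↔ ((π ⟨x-1, hx⟩ : Fin n) : ℕ) < ((π ⟨y-1, hy⟩ : Fin n) : ℕ) := by
  rw [sval_eq n π x hx, sval_eq n π y hy]
  omega

lemma sval_ne (n : ℕ) (π : Equiv.Perm (Fin n)) (x y : ℕ) (hx : x - 1 < n) (hy : y - 1 < n)
    (hx1 : 1 ≤ x) (hy1 : 1 ≤ y) (hxy : x ≠ y) : sval n π x ≠ sval n π y := by
  rw [sval_eq n π x hx, sval_eq n π y hy]
  intro hc
  have h1 : π ⟨x-1,hx⟩ = π ⟨y-1,hy⟩ := Fin.ext (by omega)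
  have h2 := congrArg Fin.val (π.injective h1)
  simp only [Fin.val_mk] at h2
  omega

def IncP (a : ℕ) (σ : Equiv.Perm (Fin a)) : Prop :=
  ∀ j ∈ Icc 1 (a-1), sval a σ j < sval a σ (j+1)

instance (a : ℕ) : DecidablePred (IncP a) := fun σ => by unfold IncP; infer_instance

def DecP (a : ℕ) (σ : Equiv.Perm (Fin a)) : Prop :=
  ∀ j ∈ Icc 1 (a-1), sval a σ (j+1) < sval a σ j

instance (a : ℕ) : DecidablePred (DecP a) := fun σ => by unfold DecP; infer_instance

lemma inc_filter_card (a : ℕ) :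
    (univ.filter (IncP a)).card = 1 := by
  rcases a with _ | a'
  · rw [filter_true_of_mem (fun σ _ => by intro j hj; rw [mem_Icc] at hj; omega)]
    simp
  · have hset : (univ.filter (IncP (a'+1))) = {Equiv.refl (Fin (a'+1))} := by
      ext σ
      simp only [mem_filter, mem_univ, true_and, mem_singleton]
      unfold IncP
      constructor
      · intro hσ
        have hmono : StrictMono ⇑σ := by
          rw [Fin.strictMono_iff_lt_succ]
          intro i
          have hx : ((i:ℕ)+1) - 1 < a'+1 := by have := i.isLt; omega
          have hy : ((i:ℕ)+1+1) - 1 < a'+1 := by have := i.isLt; omega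
          have hj := hσ ((i:ℕ)+1) (mem_Icc.mpr ⟨by omega, by have := i.isLt; omega⟩)
          rw [sval_lt_sval_iff _ _ _ _ hx hy] at hj
          have e1 : (⟨(i:ℕ)+1-1, hx⟩ : Fin (a'+1)) = Fin.castSucc i := Fin.ext (by simp)
          have e2 : (⟨(i:ℕ)+1+1-1, hy⟩ : Fin (a'+1)) = Fin.succ i := Fin.ext (by simp)
          rw [e1, e2] at hj
          rw [Fin.lt_def]
          exact hj
        have h1 : ⇑σ = (univ : Finset (Fin (a'+1))).orderEmbOfFin (by simp) :=
          Finset.orderEmbOfFin_unique _ (fun x => mem_univ _) hmono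
        have h2 : (id : Fin (a'+1) → Fin (a'+1)) =
            (univ : Finset (Fin (a'+1))).orderEmbOfFin (by simp) :=
          Finset.orderEmbOfFin_unique _ (fun x => mem_univ _) strictMono_id
        apply Equiv.ext
        intro i
        have h3 := congrFun (h1.trans h2.symm) i
        simpa using h3
      · rintro rfl
        intro j hj
        rw [mem_Icc] at hj
        have hx : j - 1 < a'+1 := by omega
        have hy : (j+1) - 1 < a'+1 := by omega
        rw [sval_lt_sval_iff _ _ _ _ hx hy]
        simp only [Equiv.refl_apply, Fin.val_mk]
        omega
    rw [hset, card_singleton]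

lemma dec_filter_card (a : ℕ) :
    (univ.filter (DecP a)).card = 1 := by
  rcases a with _ | a'
  · rw [filter_true_of_mem (fun σ _ => by intro j hj; rw [mem_Icc] at hj; omega)]
    simp
  · have hset : (univ.filter (DecP (a'+1))) = {(Fin.revPerm : Equiv.Perm (Fin (a'+1)))} := by
      ext σ
      simp only [mem_filter, mem_univ, true_and, mem_singleton]
      unfold DecP
      constructor
      · intro hσ
        have hanti : StrictAnti ⇑σ := by
          rw [Fin.strictAnti_iff_succ_lt]
          intro i
          have hx : ((i:ℕ)+1) - 1 < a'+1 := by have := i.isLt; omega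
          have hy : ((i:ℕ)+1+1) - 1 < a'+1 := by have := i.isLt; omega
          have hj := hσ ((i:ℕ)+1) (mem_Icc.mpr ⟨by omega, by have := i.isLt; omega⟩)
          rw [sval_lt_sval_iff _ _ _ _ hy hx] at hj
          have e1 : (⟨(i:ℕ)+1-1, hx⟩ : Fin (a'+1)) = Fin.castSucc i := Fin.ext (by simp)
          have e2 : (⟨(i:ℕ)+1+1-1, hy⟩ : Fin (a'+1)) = Fin.succ i := Fin.ext (by simp)
          rw [e1, e2] at hj
          rw [Fin.lt_def]
          exact hj
        have hmono : StrictMono (⇑σ ∘ ⇑(Fin.revPerm : Equiv.Perm (Fin (a'+1)))) := by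
          intro x y hxy
          apply hanti
          simp only [Fin.revPerm_apply]
          exact Fin.rev_lt_rev.mpr hxy
        have h1 : (⇑σ ∘ ⇑(Fin.revPerm : Equiv.Perm (Fin (a'+1)))) =
            (univ : Finset (Fin (a'+1))).orderEmbOfFin (by simp) :=
          Finset.orderEmbOfFin_unique _ (fun x => mem_univ _) hmono
        have h2 : (id : Fin (a'+1) → Fin (a'+1)) =
            (univ : Finset (Fin (a'+1))).orderEmbOfFin (by simp) :=
          Finset.orderEmbOfFin_unique _ (fun x => mem_univ _) strictMono_id
        apply Equiv.ext
        intro i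
        have h3 := congrFun (h1.trans h2.symm) (Fin.rev i)
        simp only [comp_apply, Fin.revPerm_apply, Fin.rev_rev, id_eq] at h3
        rw [h3]
        simp
      · rintro rfl
        intro j hj
        rw [mem_Icc] at hj
        have hx : j - 1 < a'+1 := by omega
        have hy : (j+1) - 1 < a'+1 := by omega
        rw [sval_lt_sval_iff _ _ _ _ hy hx]
        simp only [Fin.revPerm_apply, Fin.val_rev, Fin.val_mk]
        omega
    rw [hset, card_singleton]

def Pva (N a : ℕ) (π : Equiv.Perm (Fin N)) : Prop :=
  (∀ j ∈ Icc 1 (a-1), sval N π (j+1) < sval N π j) ∧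
  (∀ j ∈ Icc (a+1) (N-1), sval N π j < sval N π (j+1))

instance (N a : ℕ) : DecidablePred (Pva N a) := fun π => by unfold Pva; infer_instance

lemma Pva_hperm {N a b : ℕ} (h : a + b = N) (A : Finset (Fin N)) (hA : A.card = a)
    (σ : Equiv.Perm (Fin a)) (τ : Equiv.Perm (Fin b)) :
    Pva N a (hperm h A hA σ τ) ↔ (DecP a σ ∧ IncP b τ) := by
  unfold Pva DecP IncP
  apply and_congr
  · apply forall₂_congr
    intro j hj
    rw [mem_Icc] at hj
    exact sval_cmp_prefix h A hA σ τ (j+1) j (by omega) (by omega) (by omega) (by omega)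
  · constructor
    · intro hp j hj
      rw [mem_Icc] at hj
      have h1 := hp (j + a) (mem_Icc.mpr ⟨by omega, by omega⟩)
      rw [sval_cmp_suffix h A hA σ τ (j+a) (j+a+1) (by omega) (by omega) (by omega)
        (by omega)] at h1
      rw [show j + a - a = j by omega, show j + a + 1 - a = j + 1 by omega] at h1
      exact h1
    · intro hp j hj
      rw [mem_Icc] at hj
      rw [sval_cmp_suffix h A hA σ τ j (j+1) (by omega) (by omega) (by omega) (by omega)]
      have h1 := hp (j - a) (mem_Icc.mpr ⟨by omega, by omega⟩)
      rw [show j - a + 1 = j + 1 - a by omega] at h1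
      exact h1

end Valley

section Valley2
open Equiv Function

lemma valley_count (N : ℕ) (hN : 1 ≤ N) (π : Equiv.Perm (Fin N)) :
    ((range (N+1)).filter fun a => Pva N a π).card
      = if sPeakSet N π = ∅ then 2 else 0 := by
  by_cases hpk : sPeakSet N π = ∅
  · rw [if_pos hpk]
    set DesF := (Icc 1 (N-1)).filter (fun j => sval N π (j+1) < sval N π j) with hDesF
    set d := DesF.card with hd
    have hdn : d ≤ N - 1 := by
      rw [hd]
      calc DesF.card ≤ (Icc 1 (N-1)).card := card_le_card (filter_subset _ _)
        _ = N - 1 := by rw [Nat.card_Icc]; omega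
    have hdown1 : ∀ j ∈ DesF, 2 ≤ j → j - 1 ∈ DesF := by
      intro j hj h2j
      rw [hDesF, mem_filter, mem_Icc] at hj
      obtain ⟨⟨hj1, hjN⟩, hdj⟩ := hj
      have hnp : ¬ (sval N π (j-1) < sval N π j ∧ sval N π (j+1) < sval N π j) := by
        intro hc
        have : j ∈ sPeakSet N π := by
          rw [sPeakSet, mem_filter, mem_Icc]
          exact ⟨⟨h2j, hjN⟩, hc⟩
        rw [hpk] at this
        exact notMem_empty j this
      have hne := sval_ne N π (j-1) j (by omega) (by omega) (by omega) (by omega) (by omega)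
      rw [hDesF, mem_filter, mem_Icc]
      refine ⟨⟨by omega, by omega⟩, ?_⟩
      rw [show j - 1 + 1 = j by omega]
      omega
    have hdownAll : ∀ j ∈ DesF, ∀ k, 1 ≤ k → k ≤ j → k ∈ DesF := by
      intro j hj
      have key : ∀ t k, 1 ≤ k → k + t = j → k ∈ DesF := by
        intro t
        induction t with
        | zero => intro k hk1 hkj; rwa [show k = j by omega]
        | succ t ih =>
          intro k hk1 hkj
          have hk1' : k + 1 ∈ DesF := ih (k+1) (by omega) (by omega)
          have := hdown1 (k+1) hk1' (by omega)
          rwa [show k + 1 - 1 = k by omega] at this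
      intro k hk1 hkj
      exact key (j - k) k hk1 (by omega)
    have hIcc : DesF = Icc 1 d := by
      ext x
      rw [mem_Icc]
      constructor
      · intro hx
        have hx1 : 1 ≤ x := by
          have := (mem_Icc.mp (mem_of_mem_filter x hx)).1
          omega
        refine ⟨hx1, ?_⟩
        have hsub : Icc 1 x ⊆ DesF := by
          intro y hy
          rw [mem_Icc] at hy
          exact hdownAll x hx y hy.1 hy.2
        have := card_le_card hsub
        rw [Nat.card_Icc] at this
        omega
      · rintro ⟨hx1, hxd⟩
        by_contra hc
        have hsub : DesF ⊆ Icc 1 (x-1) := by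
          intro y hy
          rw [mem_Icc]
          have hy1 : 1 ≤ y := by
            have := (mem_Icc.mp (mem_of_mem_filter y hy)).1
            omega
          refine ⟨hy1, ?_⟩
          by_contra hyx
          push_neg at hyx
          exact hc (hdownAll y hy x hx1 (by omega))
        have := card_le_card hsub
        rw [Nat.card_Icc] at this
        omega
    have hPva : ∀ a ∈ range (N+1), ((fun a => Pva N a π) a ↔ (d ≤ a ∧ a ≤ d + 1)) := by
      intro a ha
      rw [mem_range] at ha
      constructor
      · rintro ⟨hp1, hp2⟩
        constructor
        · by_contra hda
          push_neg at hda
          have hdD : d ∈ DesF := by rw [hIcc, mem_Icc]; omega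
          have hdes : sval N π (d+1) < sval N π d := (mem_filter.mp hdD).2
          have hasc := hp2 d (mem_Icc.mpr ⟨by omega, by omega⟩)
          omega
        · by_cases ha2 : 2 ≤ a
          · have hdd := hp1 (a-1) (mem_Icc.mpr ⟨by omega, le_refl _⟩)
            have hmem : a - 1 ∈ DesF := by
              rw [hDesF, mem_filter, mem_Icc]
              exact ⟨⟨by omega, by omega⟩, hdd⟩
            rw [hIcc, mem_Icc] at hmem
            omega
          · omega
      · rintro ⟨hd1, hd2⟩
        constructor
        · intro j hj
          rw [mem_Icc] at hj
          have hmem : j ∈ DesF := by rw [hIcc, mem_Icc]; omega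
          exact (mem_filter.mp hmem).2
        · intro j hj
          rw [mem_Icc] at hj
          have hnd : j ∉ DesF := by rw [hIcc, mem_Icc]; omega
          have hnd' : ¬ (sval N π (j+1) < sval N π j) := by
            intro hc
            exact hnd (by rw [hDesF, mem_filter, mem_Icc]; exact ⟨⟨by omega, by omega⟩, hc⟩)
          have hne := sval_ne N π j (j+1) (by omega) (by omega) (by omega) (by omega) (by omega)
          omega
    rw [filter_congr hPva]
    have hfd : (range (N+1)).filter (fun a => d ≤ a ∧ a ≤ d + 1) = {d, d+1} := by
      ext x
      simp only [mem_filter, mem_range, mem_insert, mem_singleton]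
      omega
    rw [hfd, card_insert_of_notMem (by simp), card_singleton]
  · rw [if_neg hpk]
    obtain ⟨i, hi⟩ := Finset.nonempty_of_ne_empty hpk
    rw [sPeakSet, mem_filter, mem_Icc] at hi
    obtain ⟨⟨hi2, hiN⟩, hc1, hc2⟩ := hi
    rw [Finset.card_eq_zero, filter_eq_empty_iff]
    intro a ha
    rw [mem_range] at ha
    rintro ⟨hp1, hp2⟩
    by_cases hia : i ≤ a
    · have h1 := hp1 (i-1) (mem_Icc.mpr ⟨by omega, by omega⟩)
      rw [show i - 1 + 1 = i by omega] at h1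
      omega
    · have h1 := hp2 i (mem_Icc.mpr ⟨by omega, by omega⟩)
      omega

end Valley2

section Valley3
open Equiv Function

lemma PP_empty (N : ℕ) (hN : 1 ≤ N) : PP N ∅ = 2^(N-1) := by
  have key : 2 * PP N ∅ = 2^N := by
    have hsum : ∑ a ∈ range (N+1), ((univ.filter (Pva N a)).card) = 2^N := by
      have h1 : ∀ a ∈ range (N+1), (univ.filter (Pva N a)).card = N.choose a := by
        intro a ha
        rw [mem_range] at ha
        have h : a + (N - a) = N := by omega
        rw [split_count h (DecP a) (IncP (N-a)) (Pva N a)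
          (fun A hA σ τ => Pva_hperm h A hA σ τ),
          dec_filter_card, inc_filter_card, mul_one, mul_one]
      rw [Finset.sum_congr rfl h1, Nat.sum_range_choose]
    rw [← hsum]
    refine Eq.symm ?_
    calc ∑ a ∈ range (N+1), (univ.filter (Pva N a)).card
        = ∑ a ∈ range (N+1), ∑ π : Equiv.Perm (Fin N), (if Pva N a π then 1 else 0) :=
          Finset.sum_congr rfl (fun a _ => Finset.card_filter _ _)
      _ = ∑ π : Equiv.Perm (Fin N), ∑ a ∈ range (N+1), (if Pva N a π then 1 else 0) :=
          Finset.sum_comm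
      _ = ∑ π : Equiv.Perm (Fin N), (if sPeakSet N π = ∅ then 2 else 0) := by
          refine Finset.sum_congr rfl (fun π _ => ?_)
          rw [← Finset.card_filter]
          exact valley_count N hN π
      _ = 2 * PP N ∅ := by
          rw [PP, Finset.card_filter, Finset.mul_sum]
          refine Finset.sum_congr rfl (fun π _ => ?_)
          split <;> simp
  have h2 : 2^N = 2 * 2^(N-1) := by
    rw [← pow_succ']
    congr 1
    omega
  omega

end Valley3

section Recursion
open Equiv Function

def Pmid (n m : ℕ) (S1 : Finset ℕ) (π : Equiv.Perm (Fin n)) : Prop :=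
  sPeakSet n π ∩ Icc 2 (m-2) = S1 ∧ sPeakSet n π ∩ Icc (m+1) (n-1) = ∅

instance (n m : ℕ) (S1 : Finset ℕ) : DecidablePred (Pmid n m S1) := fun π => by
  unfold Pmid; infer_instance

lemma Pmid_hperm {n m : ℕ} (S1 : Finset ℕ) (hm2 : 2 ≤ m) (hmn : m + 1 ≤ n)
    (h : (m-1) + (n-m+1) = n) (A : Finset (Fin n)) (hA : A.card = m-1)
    (σ : Equiv.Perm (Fin (m-1))) (τ : Equiv.Perm (Fin (n-m+1))) :
    Pmid n m S1 (hperm h A hA σ τ) ↔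
      (sPeakSet (m-1) σ = S1 ∧ sPeakSet (n-m+1) τ = ∅) := by
  unfold Pmid
  apply and_congr
  · have hint : sPeakSet n (hperm h A hA σ τ) ∩ Icc 2 (m-2) = sPeakSet (m-1) σ := by
      ext i
      rw [mem_inter]
      constructor
      · rintro ⟨hp, hicc⟩
        rw [mem_Icc] at hicc
        exact (peak_hperm_prefix h A hA σ τ i hicc.1 (by omega)).mp hp
      · intro hp
        have hicc := mem_Icc.mp (mem_of_mem_filter i hp)
        refine ⟨(peak_hperm_prefix h A hA σ τ i (by omega) (by omega)).mpr hp,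
          mem_Icc.mpr ⟨by omega, by omega⟩⟩
    rw [hint]
  · rw [eq_empty_iff_forall_notMem, eq_empty_iff_forall_notMem]
    constructor
    · intro hf j hj
      have hjicc := mem_Icc.mp (mem_of_mem_filter j hj)
      apply hf (j + (m-1))
      rw [mem_inter]
      constructor
      · rw [peak_hperm_suffix h A hA σ τ (j + (m-1)) (by omega) (by omega)]
        rwa [show j + (m-1) - (m-1) = j by omega]
      · rw [mem_Icc]
        omega
    · intro hf i hi
      rw [mem_inter] at hi
      obtain ⟨hp, hicc⟩ := hi
      rw [mem_Icc] at hicc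
      apply hf (i - (m-1))
      rw [← peak_hperm_suffix h A hA σ τ i (by omega) (by omega)]
      exact hp

lemma Pmid_decomp {n m : ℕ} (S1 : Finset ℕ) (hm2 : 2 ≤ m) (hmn : m + 1 ≤ n)
    (hS1 : ∀ x ∈ S1, 2 ≤ x ∧ x ≤ m - 2) (π : Equiv.Perm (Fin n)) :
    Pmid n m S1 π ↔ (sPeakSet n π = insert m S1 ∨ sPeakSet n π = insert (m-1) S1 ∨
      sPeakSet n π = S1) := by
  constructor
  · rintro ⟨hlow, hhigh⟩
    have hTsub : ∀ x ∈ sPeakSet n π, 2 ≤ x ∧ x ≤ n-1 := fun x hx =>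
      mem_Icc.mp (mem_of_mem_filter x hx)
    have hmem_low : ∀ x ∈ sPeakSet n π, x ≤ m - 2 → x ∈ S1 := by
      intro x hx hxle
      rw [← hlow, mem_inter]
      exact ⟨hx, mem_Icc.mpr ⟨(hTsub x hx).1, hxle⟩⟩
    have hmem_high : ∀ x ∈ sPeakSet n π, ¬ (m + 1 ≤ x) := by
      intro x hx hxge
      have : x ∈ sPeakSet n π ∩ Icc (m+1) (n-1) := by
        rw [mem_inter]
        exact ⟨hx, mem_Icc.mpr ⟨hxge, (hTsub x hx).2⟩⟩
      rw [hhigh] at this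
      exact notMem_empty x this
    have hS1mem : ∀ x ∈ S1, x ∈ sPeakSet n π := by
      intro x hx
      have : x ∈ sPeakSet n π ∩ Icc 2 (m-2) := by rw [hlow]; exact hx
      exact (mem_inter.mp this).1
    by_cases hm : m ∈ sPeakSet n π
    · left
      ext x
      rw [mem_insert]
      constructor
      · intro hx
        have hx' := hTsub x hx
        by_cases hxm : x = m
        · exact Or.inl hxm
        · by_cases hxm1 : x = m - 1
          · exfalso
            subst hxm1
            exact sPeak_consec n π (m-1) hx (by rwa [show m - 1 + 1 = m by omega])
          · by_cases hxlow : x ≤ m - 2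
            · exact Or.inr (hmem_low x hx hxlow)
            · exact absurd (by omega : m + 1 ≤ x) (hmem_high x hx)
      · rintro (rfl | hx)
        · exact hm
        · exact hS1mem x hx
    · by_cases hm1 : m - 1 ∈ sPeakSet n π
      · right; left
        ext x
        rw [mem_insert]
        constructor
        · intro hx
          have hx' := hTsub x hx
          by_cases hxm : x = m
          · exact absurd (by rwa [hxm] at hx) hm
          · by_cases hxm1 : x = m - 1
            · exact Or.inl hxm1
            · by_cases hxlow : x ≤ m - 2
              · exact Or.inr (hmem_low x hx hxlow)
              · exact absurd (by omega : m + 1 ≤ x) (hmem_high x hx)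
        · rintro (rfl | hx)
          · exact hm1
          · exact hS1mem x hx
      · right; right
        ext x
        constructor
        · intro hx
          have hx' := hTsub x hx
          by_cases hxm : x = m
          · exact absurd (by rwa [hxm] at hx) hm
          · by_cases hxm1 : x = m - 1
            · exact absurd (by rwa [hxm1] at hx) hm1
            · by_cases hxlow : x ≤ m - 2
              · exact hmem_low x hx hxlow
              · exact absurd (by omega : m + 1 ≤ x) (hmem_high x hx)
        · exact hS1mem x
  · intro hT
    have hcomp : ∀ (c : ℕ), c = m ∨ c = m - 1 →
        ((insert c S1) ∩ Icc 2 (m-2) = S1 ∧ (insert c S1) ∩ Icc (m+1) (n-1) = ∅) := by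
      intro c hc
      constructor
      · ext x
        rw [mem_inter, mem_insert, mem_Icc]
        constructor
        · rintro ⟨(rfl | hx), h2, h3⟩
          · omega
          · exact hx
        · intro hx
          have := hS1 x hx
          exact ⟨Or.inr hx, by omega⟩
      · rw [eq_empty_iff_forall_notMem]
        intro x hx
        rw [mem_inter, mem_insert, mem_Icc] at hx
        obtain ⟨(rfl | hx1), h2, h3⟩ := hx
        · omega
        · have := hS1 x hx1
          omega
    have hcompS1 : S1 ∩ Icc 2 (m-2) = S1 ∧ S1 ∩ Icc (m+1) (n-1) = ∅ := by
      constructor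
      · ext x
        rw [mem_inter, mem_Icc]
        constructor
        · exact fun hx => hx.1
        · intro hx
          have := hS1 x hx
          exact ⟨hx, by omega⟩
      · rw [eq_empty_iff_forall_notMem]
        intro x hx
        rw [mem_inter, mem_Icc] at hx
        have := hS1 x hx.1
        omega
    rcases hT with hT | hT | hT <;> unfold Pmid <;> rw [hT]
    · exact hcomp m (Or.inl rfl)
    · exact hcomp (m-1) (Or.inr rfl)
    · exact hcompS1

end Recursion

section Recursion2
open Equiv Function

lemma rec_identity (n m : ℕ) (S1 : Finset ℕ) (hm2 : 2 ≤ m) (hmn : m + 1 ≤ n)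
    (hS1 : ∀ x ∈ S1, 2 ≤ x ∧ x ≤ m - 2) :
    n.choose (m-1) * PP (m-1) S1 * PP (n-m+1) ∅ =
      PP n (insert m S1) + PP n (insert (m-1) S1) + PP n S1 := by
  classical
  have h : (m-1) + (n-m+1) = n := by omega
  have hsplit := split_count h (fun σ : Equiv.Perm (Fin (m-1)) => sPeakSet (m-1) σ = S1)
      (fun τ : Equiv.Perm (Fin (n-m+1)) => sPeakSet (n-m+1) τ = ∅) (Pmid n m S1)
      (fun A hA σ τ => Pmid_hperm S1 hm2 hmn h A hA σ τ)
  have hL : n.choose (m-1) * PP (m-1) S1 * PP (n-m+1) ∅ =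
      (univ.filter (Pmid n m S1)).card := by
    rw [hsplit, PP, PP]
  rw [hL]
  have hdec : (univ.filter (Pmid n m S1)) =
      ((univ.filter fun π : Equiv.Perm (Fin n) => sPeakSet n π = insert m S1) ∪
        ((univ.filter fun π : Equiv.Perm (Fin n) => sPeakSet n π = insert (m-1) S1) ∪
         (univ.filter fun π : Equiv.Perm (Fin n) => sPeakSet n π = S1))) := by
    rw [← filter_or, ← filter_or]
    exact filter_congr (fun π _ => Pmid_decomp S1 hm2 hmn hS1 π)
  have hmS1 : m ∉ S1 := fun hc => by have := hS1 m hc; omega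
  have hm1S1 : m - 1 ∉ S1 := fun hc => by have := hS1 (m-1) hc; omega
  have hd1 : Disjoint (univ.filter fun π : Equiv.Perm (Fin n) => sPeakSet n π = insert (m-1) S1)
      (univ.filter fun π : Equiv.Perm (Fin n) => sPeakSet n π = S1) := by
    rw [Finset.disjoint_left]
    intro π h1 h2
    rw [mem_filter] at h1 h2
    have := h1.2.symm.trans h2.2
    have hmem : m - 1 ∈ S1 := by rw [← this]; exact mem_insert_self _ _
    exact hm1S1 hmem
  have hd2 : Disjoint (univ.filter fun π : Equiv.Perm (Fin n) => sPeakSet n π = insert m S1)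
      ((univ.filter fun π : Equiv.Perm (Fin n) => sPeakSet n π = insert (m-1) S1) ∪
       (univ.filter fun π : Equiv.Perm (Fin n) => sPeakSet n π = S1)) := by
    rw [Finset.disjoint_left]
    intro π h1 h2
    rw [mem_filter] at h1
    rcases Finset.mem_union.mp h2 with h2 | h2 <;> rw [mem_filter] at h2
    · have heq := h1.2.symm.trans h2.2
      have hmem : m ∈ insert (m-1) S1 := by rw [← heq]; exact mem_insert_self _ _
      rcases mem_insert.mp hmem with hc | hc
      · omega
      · exact hmS1 hc
    · have heq := h1.2.symm.trans h2.2
      have hmem : m ∈ S1 := by rw [← heq]; exact mem_insert_self _ _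
      exact hmS1 hmem
  rw [hdec, card_union_of_disjoint hd2, card_union_of_disjoint hd1, PP, PP, PP]
  ring

end Recursion2

section Construct
open Equiv Function

lemma construct_peak (n m : ℕ) (S1 : Finset ℕ) (hm2 : 2 ≤ m) (hmn : m + 1 ≤ n)
    (hS1 : ∀ x ∈ S1, 2 ≤ x ∧ x ≤ m - 2)
    (σ : Equiv.Perm (Fin (m-1))) (hσ : sPeakSet (m-1) σ = S1) :
    ∃ π : Equiv.Perm (Fin n), sPeakSet n π = insert m S1 := by
  classical
  have h : (m-1) + (n-m+1) = n := by omega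
  let A : Finset (Fin n) := (range (m-1)).attachFin (fun x hx => by rw [mem_range] at hx; omega)
  have hA : A.card = m-1 := by rw [Finset.card_attachFin, card_range]
  refine ⟨hperm h A hA σ Fin.revPerm, ?_⟩
  have hembA : ∀ i : Fin (m-1), A.orderEmbOfFin hA i =
      (⟨(i:ℕ), by have := i.isLt; omega⟩ : Fin n) := by
    have hf : (fun i : Fin (m-1) => (⟨(i:ℕ), by have := i.isLt; omega⟩ : Fin n)) =
        A.orderEmbOfFin hA := by
      apply Finset.orderEmbOfFin_unique
      · intro x
        rw [Finset.mem_attachFin, mem_range]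
        exact x.isLt
      · intro x y hxy
        rw [Fin.lt_def] at hxy ⊢
        exact hxy
    intro i
    exact (congrFun hf i).symm
  have hcmem : ∀ x : Fin n, x ∈ Aᶜ ↔ m - 1 ≤ (x : ℕ) := by
    intro x
    rw [Finset.mem_compl, Finset.mem_attachFin, mem_range]
    omega
  have hembC : ∀ j : Fin (n-m+1), Aᶜ.orderEmbOfFin (compl_card h A hA) j =
      (⟨(m-1) + (j:ℕ), by have := j.isLt; omega⟩ : Fin n) := by
    have hf : (fun j : Fin (n-m+1) => (⟨(m-1) + (j:ℕ), by have := j.isLt; omega⟩ : Fin n)) =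
        Aᶜ.orderEmbOfFin (compl_card h A hA) := by
      apply Finset.orderEmbOfFin_unique
      · intro x
        rw [hcmem]
        simp
      · intro x y hxy
        rw [Fin.lt_def] at hxy ⊢
        simpa using hxy
    intro j
    exact (congrFun hf j).symm
  have hsv_pre : ∀ j, 1 ≤ j → j ≤ m - 1 →
      sval n (hperm h A hA σ Fin.revPerm) j ≤ ((m:ℤ) - 1) := by
    intro j h1 h2
    rw [sval_hperm_lt h A hA σ Fin.revPerm j (by omega), hembA]
    have := (σ ⟨j-1, by omega⟩).isLt
    simp only [Fin.val_mk]
    omega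
  have hsuf : ∀ j, m ≤ j → j ≤ n →
      sval n (hperm h A hA σ Fin.revPerm) j =
        ((m:ℤ) - 1) + (((n-m+1) - (j - (m-1)) : ℕ) : ℤ) + 1 := by
    intro j h1 h2
    rw [sval_hperm_ge h A hA σ Fin.revPerm j (by omega) h2 (by omega), hembC]
    simp only [Fin.val_mk, Fin.revPerm_apply, Fin.val_rev]
    push_cast
    omega
  ext i
  by_cases hiicc : 2 ≤ i ∧ i ≤ n - 1
  · obtain ⟨hi2, hiN⟩ := hiicc
    by_cases hile : i ≤ m - 2
    · rw [peak_hperm_prefix h A hA σ Fin.revPerm i hi2 (by omega), hσ]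
      constructor
      · exact fun hx => mem_insert_of_mem hx
      · intro hx
        rcases mem_insert.mp hx with rfl | hx
        · exfalso; omega
        · exact hx
    · by_cases him1 : i = m - 1
      · constructor
        · intro hx
          rw [sPeakSet, mem_filter] at hx
          have hc2 := hx.2.2
          have e1 := hsuf (i+1) (by omega) (by omega)
          have e2 := hsv_pre i (by omega) (by omega)
          exfalso
          rw [e1] at hc2
          omega
        · intro hx
          exfalso
          rcases mem_insert.mp hx with rfl | hx
          · omega
          · have := hS1 i hx; omega
      · by_cases him : i = m
        · constructor
          · intro _
            rw [him]
            exact mem_insert_self _ _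
          · intro _
            rw [sPeakSet, mem_filter, mem_Icc]
            refine ⟨⟨hi2, hiN⟩, ?_, ?_⟩
            · have e1 := hsv_pre (i-1) (by omega) (by omega)
              have e2 := hsuf i (by omega) (by omega)
              rw [e2]
              omega
            · have e1 := hsuf i (by omega) (by omega)
              have e2 := hsuf (i+1) (by omega) (by omega)
              rw [e1, e2]
              omega
        · constructor
          · intro hx
            rw [sPeakSet, mem_filter] at hx
            have hdesc := hx.2.1
            have e1 := hsuf (i-1) (by omega) (by omega)
            have e2 := hsuf i (by omega) (by omega)
            exfalso
            rw [e1, e2] at hdesc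
            omega
          · intro hx
            exfalso
            rcases mem_insert.mp hx with rfl | hx
            · omega
            · have := hS1 i hx; omega
  · constructor
    · intro hx
      have := mem_Icc.mp (mem_of_mem_filter i hx)
      exact absurd this hiicc
    · intro hx
      exfalso
      rcases mem_insert.mp hx with rfl | hx
      · exact hiicc ⟨hm2, by omega⟩
      · have := hS1 i hx
        exact hiicc ⟨this.1, by omega⟩

lemma PP_pos (M : ℕ) : ∀ (S : Finset ℕ), S.sup id = M → (∀ i ∈ S, i + 1 ∉ S) →
    (∀ i ∈ S, 2 ≤ i) → ∀ n, 1 ≤ n → S ⊆ Icc 2 (n-1) → 0 < PP n S := by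
  induction M using Nat.strong_induction_on with
  | _ M ih =>
    intro S hsup hcons h2 n hn hsub
    rcases S.eq_empty_or_nonempty with rfl | hne
    · rw [PP_empty n hn]
      positivity
    · obtain ⟨m', hm'S, hm'⟩ := Finset.exists_mem_eq_sup S hne id
      have hmS : S.sup id ∈ S := by rw [hm']; exact hm'S
      set m := S.sup id with hmdef
      have hm2 : 2 ≤ m := h2 m hmS
      have hmax : ∀ x ∈ S, x ≤ m := fun x hx => Finset.le_sup (f := id) hx
      have hmn : m + 1 ≤ n := by
        have := hsub hmS
        rw [mem_Icc] at this
        omega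
      set S1 := S.erase m with hS1def
      have hS1 : ∀ x ∈ S1, 2 ≤ x ∧ x ≤ m - 2 := by
        intro x hx
        have hxS := mem_of_mem_erase hx
        have hxne := ne_of_mem_erase hx
        have hxle := hmax x hxS
        have hxm1 : x ≠ m - 1 := by
          intro hc
          apply hcons x hxS
          rw [hc, show m - 1 + 1 = m by omega]
          exact hmS
        exact ⟨h2 x hxS, by omega⟩
      have hS1sup : S1.sup id < M := by
        have hle : S1.sup id ≤ m - 2 := Finset.sup_le (fun x hx => (hS1 x hx).2)
        omega
      have hσpos := ih (S1.sup id) hS1sup S1 rfl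
        (fun i hi hc => hcons i (mem_of_mem_erase hi) (mem_of_mem_erase hc))
        (fun i hi => h2 i (mem_of_mem_erase hi)) (m-1) (by omega)
        (fun x hx => mem_Icc.mpr ⟨(hS1 x hx).1, by have := (hS1 x hx).2; omega⟩)
      obtain ⟨σ, hσmem⟩ := Finset.card_pos.mp hσpos
      rw [mem_filter] at hσmem
      obtain ⟨π, hπ⟩ := construct_peak n m S1 hm2 hmn hS1 σ hσmem.2
      rw [Finset.insert_erase hmS] at hπ
      apply Finset.card_pos.mpr
      exact ⟨π, mem_filter.mpr ⟨mem_univ _, hπ⟩⟩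

end Construct

section BinPoly
open Polynomial

noncomputable def binPoly (r : ℕ) : Polynomial ℚ :=
  Polynomial.C (1 / (r.factorial : ℚ)) * ∏ i ∈ range r, (Polynomial.X - Polynomial.C (i : ℚ))

lemma binPoly_eval (r : ℕ) (x : ℚ) :
    (binPoly r).eval x = (1 / (r.factorial : ℚ)) * ∏ i ∈ range r, (x - (i : ℚ)) := by
  rw [binPoly, eval_mul, eval_C, eval_prod]
  congr 1
  exact Finset.prod_congr rfl (fun i _ => by rw [eval_sub, eval_X, eval_C])

lemma prod_cast_descFactorial (N r : ℕ) :
    ∏ i ∈ range r, ((N : ℚ) - (i : ℚ)) = (N.descFactorial r : ℚ) := by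
  rcases le_or_gt r N with h | h
  · rw [Nat.descFactorial_eq_prod_range, Nat.cast_prod]
    refine Finset.prod_congr rfl (fun i hi => ?_)
    rw [mem_range] at hi
    rw [Nat.cast_sub (by omega)]
  · rw [Finset.prod_eq_zero (mem_range.mpr h) (by rw [sub_self]),
      Nat.descFactorial_eq_zero_iff_lt.mpr h, Nat.cast_zero]

lemma binPoly_eval_nat (r N : ℕ) : (binPoly r).eval (N : ℚ) = (N.choose r : ℚ) := by
  rw [binPoly_eval, prod_cast_descFactorial, Nat.descFactorial_eq_factorial_mul_choose,
    Nat.cast_mul]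
  have : (r.factorial : ℚ) ≠ 0 := by
    exact_mod_cast Nat.factorial_ne_zero r
  field_simp

lemma binPoly_int_valued (r : ℕ) (k : ℤ) : ∃ z : ℤ, (binPoly r).eval (k : ℚ) = (z : ℚ) := by
  have hfac : (r.factorial : ℚ) ≠ 0 := by exact_mod_cast Nat.factorial_ne_zero r
  rcases le_or_gt 0 k with hk | hk
  · refine ⟨(k.toNat.choose r : ℤ), ?_⟩
    have hke : (k : ℚ) = ((k.toNat : ℕ) : ℚ) := by
      have := Int.toNat_of_nonneg hk
      exact_mod_cast this.symm
    rw [hke, binPoly_eval_nat]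
    push_cast
    ring
  · set l : ℕ := (-1 - k).toNat with hl
    have hlk : ((l : ℕ) : ℤ) = -1 - k := Int.toNat_of_nonneg (by omega)
    have hkl : (k : ℚ) = -1 - (l : ℚ) := by
      have h2 : ((l : ℕ) : ℚ) = ((-1 - k : ℤ) : ℚ) := by exact_mod_cast congrArg (fun z : ℤ => (z : ℚ)) hlk
      push_cast at h2
      linarith
    refine ⟨(-1)^r * ((l + r).choose r : ℤ), ?_⟩
    rw [binPoly_eval]
    have hstep1 : ∏ i ∈ range r, ((k : ℚ) - (i : ℚ)) =
        (-1 : ℚ)^r * ∏ i ∈ range r, ((l : ℚ) + 1 + (i : ℚ)) := by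
      have : ∀ i ∈ range r, (k : ℚ) - (i : ℚ) = (-1) * ((l : ℚ) + 1 + (i : ℚ)) := by
        intro i _
        rw [hkl]
        ring
      rw [Finset.prod_congr rfl this, Finset.prod_mul_distrib, Finset.prod_const, card_range]
    have hstep2 : ∏ i ∈ range r, ((l : ℚ) + 1 + (i : ℚ)) = ((l + r).descFactorial r : ℚ) := by
      have hrefl := Finset.prod_range_reflect (fun i => (((l + r : ℕ) : ℚ) - (i : ℚ))) r
      have hcongr : ∏ j ∈ range r, ((l : ℚ) + 1 + (j : ℚ)) =
          ∏ j ∈ range r, (((l + r : ℕ) : ℚ) - ((r - 1 - j : ℕ) : ℚ)) := by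
        refine Finset.prod_congr rfl (fun j hj => ?_)
        rw [mem_range] at hj
        rw [Nat.cast_sub (by omega : j ≤ r - 1), Nat.cast_sub (by omega : 1 ≤ r)]
        push_cast
        ring
      rw [hcongr, hrefl, prod_cast_descFactorial]
    rw [hstep1, hstep2, Nat.descFactorial_eq_factorial_mul_choose, Nat.cast_mul]
    push_cast
    field_simp

lemma binPoly_natDegree (r : ℕ) : (binPoly r).natDegree = r := by
  have hprod : (∏ i ∈ range r, (Polynomial.X - Polynomial.C (i : ℚ))).Monic :=
    Polynomial.monic_prod_of_monic _ _ (fun i _ => Polynomial.monic_X_sub_C _)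
  have hdeg : (∏ i ∈ range r, (Polynomial.X - Polynomial.C (i : ℚ))).natDegree = r := by
    rw [Polynomial.natDegree_prod_of_monic _ _ (fun i _ => Polynomial.monic_X_sub_C _),
      Finset.sum_congr rfl (fun i (_ : i ∈ range r) => Polynomial.natDegree_X_sub_C (i:ℚ)),
      Finset.sum_const, card_range, smul_eq_mul, mul_one]
  rw [binPoly, Polynomial.natDegree_C_mul (by positivity : (1 / (r.factorial : ℚ)) ≠ 0), hdeg]

lemma binPoly_coeff (r : ℕ) : (binPoly r).coeff r = 1 / (r.factorial : ℚ) := by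
  have hprod : (∏ i ∈ range r, (Polynomial.X - Polynomial.C (i : ℚ))).Monic :=
    Polynomial.monic_prod_of_monic _ _ (fun i _ => Polynomial.monic_X_sub_C _)
  have hdeg : (∏ i ∈ range r, (Polynomial.X - Polynomial.C (i : ℚ))).natDegree = r := by
    rw [Polynomial.natDegree_prod_of_monic _ _ (fun i _ => Polynomial.monic_X_sub_C _),
      Finset.sum_congr rfl (fun i (_ : i ∈ range r) => Polynomial.natDegree_X_sub_C (i:ℚ)),
      Finset.sum_const, card_range, smul_eq_mul, mul_one]
  rw [binPoly, Polynomial.coeff_C_mul]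
  have := hprod.coeff_natDegree
  rw [hdeg] at this
  rw [this, mul_one]

end BinPoly

section Main
open Polynomial

lemma PP_insert_zero (n m : ℕ) (S1 : Finset ℕ)
    (hbad : m = 2 ∨ (3 ≤ m ∧ m - 2 ∈ S1)) : PP n (insert (m-1) S1) = 0 := by
  rw [PP, Finset.card_eq_zero, filter_eq_empty_iff]
  intro π _
  intro hc
  rcases hbad with rfl | ⟨hm3, hmem⟩
  · have h1 : (1:ℕ) ∈ sPeakSet n π := by rw [hc]; exact mem_insert_self _ _
    have := mem_Icc.mp (mem_of_mem_filter 1 h1)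
    omega
  · have h1 : m - 1 ∈ sPeakSet n π := by rw [hc]; exact mem_insert_self _ _
    have h0 : m - 2 ∈ sPeakSet n π := by rw [hc]; exact mem_insert_of_mem hmem
    exact sPeak_consec n π (m-2) h0 (by rwa [show m - 2 + 1 = m - 1 by omega])

theorem stmtPP (M : ℕ) : ∀ S : Finset ℕ, S.sup id = M → (∀ i ∈ S, i + 1 ∉ S) →
    (∀ i ∈ S, 2 ≤ i) →
    ∃ p : Polynomial ℚ,
      (∀ k : ℤ, ∃ z : ℤ, p.eval (k : ℚ) = (z : ℚ)) ∧
      p.natDegree = S.sup id - 1 ∧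
      ∀ n : ℕ, 1 ≤ n → S ⊆ Finset.Icc 2 (n - 1) →
        (PP n S : ℚ) = p.eval (n : ℚ) * 2 ^ (n - S.card - 1) := by
  induction M using Nat.strong_induction_on with
  | _ M ih =>
    intro S hsup hcons h2
    rcases S.eq_empty_or_nonempty with rfl | hne
    · refine ⟨1, fun k => ⟨1, by simp⟩, by simp, ?_⟩
      intro n hn _
      rw [PP_empty n hn]
      simp
    · obtain ⟨m', hm'S, hm'⟩ := Finset.exists_mem_eq_sup S hne id
      have hmS : S.sup id ∈ S := by rw [hm']; exact hm'S
      set m := S.sup id with hmdef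
      have hm2 : 2 ≤ m := h2 m hmS
      have hmax : ∀ x ∈ S, x ≤ m := fun x hx => Finset.le_sup (f := id) hx
      set S1 := S.erase m with hS1def
      have hS1 : ∀ x ∈ S1, 2 ≤ x ∧ x ≤ m - 2 := by
        intro x hx
        have hxS := mem_of_mem_erase hx
        have hxne := ne_of_mem_erase hx
        have hxle := hmax x hxS
        have hxm1 : x ≠ m - 1 := by
          intro hcx
          apply hcons x hxS
          rw [hcx, show m - 1 + 1 = m by omega]
          exact hmS
        exact ⟨h2 x hxS, by omega⟩
      have hS1cons : ∀ i ∈ S1, i + 1 ∉ S1 :=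
        fun i hi hci => hcons i (mem_of_mem_erase hi) (mem_of_mem_erase hci)
      have hS12 : ∀ i ∈ S1, 2 ≤ i := fun i hi => h2 i (mem_of_mem_erase hi)
      have hS1sup : S1.sup id ≤ m - 2 := Finset.sup_le (fun x hx => (hS1 x hx).2)
      have hS1card : S1.card = S.card - 1 := by rw [hS1def, Finset.card_erase_of_mem hmS]
      have hScard1 : 1 ≤ S.card := Finset.card_pos.mpr hne
      have hS1cardle : S1.card ≤ m - 3 := by
        have hsub : S1 ⊆ Icc 2 (m-2) := fun x hx => mem_Icc.mpr ⟨(hS1 x hx).1, (hS1 x hx).2⟩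
        have := Finset.card_le_card hsub
        rw [Nat.card_Icc] at this
        omega
      obtain ⟨p1, hp1int, hp1deg, hp1val⟩ := ih (S1.sup id) (by omega) S1 rfl hS1cons hS12
      have hp1deglt : p1.natDegree < m - 1 := by rw [hp1deg]; omega
      -- value of p1 at m-1
      have hPPa := hp1val (m-1) (by omega)
        (fun x hx => mem_Icc.mpr ⟨(hS1 x hx).1, by have := (hS1 x hx).2; omega⟩)
      obtain ⟨c, hc⟩ := hp1int ((m-1 : ℕ) : ℤ)
      have hc' : p1.eval ((m-1 : ℕ) : ℚ) = (c : ℚ) := by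
        rw [← hc]
        norm_cast
      have hPPapos : 0 < PP (m-1) S1 := PP_pos (S1.sup id) S1 rfl hS1cons hS12 (m-1) (by omega)
        (fun x hx => mem_Icc.mpr ⟨(hS1 x hx).1, by have := (hS1 x hx).2; omega⟩)
      have hexp1 : (m-1) - S1.card - 1 = m - S.card - 1 := by omega
      have hPPm : (PP (m-1) S1 : ℚ) = (c : ℚ) * 2 ^ (m - S.card - 1) := by
        rw [hPPa, hc', hexp1]
      have hcpos : 0 < (c : ℚ) := by
        have hppc : (0:ℚ) < (PP (m-1) S1 : ℚ) := by exact_mod_cast hPPapos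
        rw [hPPm] at hppc
        nlinarith [hppc, (by positivity : (0:ℚ) < 2 ^ (m - S.card - 1))]
      -- polynomial q for S2 = insert (m-1) S1
      obtain ⟨q, hqint, hqdeglt, hqcoeff, hqval⟩ :
          ∃ q : Polynomial ℚ, (∀ k : ℤ, ∃ z : ℤ, q.eval (k : ℚ) = (z : ℚ)) ∧
            q.natDegree < m - 1 ∧ q.coeff (m-1) = 0 ∧
            ∀ n : ℕ, 1 ≤ n → S ⊆ Finset.Icc 2 (n - 1) →
              (PP n (insert (m-1) S1) : ℚ) = q.eval (n : ℚ) * 2 ^ (n - S.card - 1) := by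
        by_cases hadm : 3 ≤ m ∧ m - 2 ∉ S1
        · obtain ⟨hm3, hnm2⟩ := hadm
          have hS2cons : ∀ i ∈ insert (m-1) S1, i + 1 ∉ insert (m-1) S1 := by
            intro i hi hci
            rcases mem_insert.mp hi with rfl | hi1
            · rcases mem_insert.mp hci with hcc | hcc
              · omega
              · have := hS1 _ hcc
                omega
            · rcases mem_insert.mp hci with hcc | hcc
              · have hb := hS1 i hi1
                have hieq : i = m - 2 := by omega
                exact hnm2 (hieq ▸ hi1)
              · exact hS1cons i hi1 hcc
          have hS22 : ∀ i ∈ insert (m-1) S1, 2 ≤ i := by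
            intro i hi
            rcases mem_insert.mp hi with rfl | hi1
            · omega
            · exact hS12 i hi1
          have hS2sup : (insert (m-1) S1).sup id = m - 1 := by
            rw [Finset.sup_insert]
            simp only [id]
            exact max_eq_left (by omega)
          obtain ⟨q, hqint, hqdeg, hqval⟩ := ih ((insert (m-1) S1).sup id)
            (by rw [hS2sup]; omega) (insert (m-1) S1) rfl hS2cons hS22
          have hm1nS1 : m - 1 ∉ S1 := fun hcc => by have := hS1 _ hcc; omega
          have hS2card : (insert (m-1) S1).card = S.card := by
            rw [Finset.card_insert_of_notMem hm1nS1]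
            omega
          refine ⟨q, hqint, ?_, ?_, ?_⟩
          · rw [hqdeg, hS2sup]
            omega
          · apply Polynomial.coeff_eq_zero_of_natDegree_lt
            rw [hqdeg, hS2sup]
            omega
          · intro n hn hsub
            have hmn : m + 1 ≤ n := by
              have := hsub hmS
              rw [mem_Icc] at this
              omega
            have := hqval n hn ?_
            · rw [this, hS2card]
            · intro x hx
              rcases mem_insert.mp hx with rfl | hx1
              · exact mem_Icc.mpr ⟨by omega, by omega⟩
              · exact mem_Icc.mpr ⟨(hS1 x hx1).1, by have := (hS1 x hx1).2; omega⟩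
        · refine ⟨0, fun k => ⟨0, by simp⟩, by simp; omega, by simp, ?_⟩
          intro n hn hsub
          have hbad : m = 2 ∨ (3 ≤ m ∧ m - 2 ∈ S1) := by
            by_cases h3 : 3 ≤ m
            · right
              refine ⟨h3, ?_⟩
              by_contra hcc
              exact hadm ⟨h3, hcc⟩
            · left; omega
          rw [PP_insert_zero n m S1 hbad]
          simp
      -- define p
      refine ⟨Polynomial.C (c:ℚ) * binPoly (m-1) - Polynomial.C 2 * p1 - q, ?_, ?_, ?_⟩
      · intro k
        obtain ⟨z1, hz1⟩ := binPoly_int_valued (m-1) k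
        obtain ⟨z2, hz2⟩ := hp1int k
        obtain ⟨z3, hz3⟩ := hqint k
        refine ⟨c * z1 - 2 * z2 - z3, ?_⟩
        rw [eval_sub, eval_sub, eval_mul, eval_mul, eval_C, eval_C, hz1, hz2, hz3]
        push_cast
        ring
      · have hle : (Polynomial.C (c:ℚ) * binPoly (m-1) - Polynomial.C 2 * p1 - q).natDegree
            ≤ m - 1 := by
          apply le_trans (Polynomial.natDegree_sub_le _ _)
          apply max_le
          · apply le_trans (Polynomial.natDegree_sub_le _ _)
            apply max_le
            · apply le_trans (Polynomial.natDegree_C_mul_le _ _)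
              rw [binPoly_natDegree]
            · apply le_trans (Polynomial.natDegree_C_mul_le _ _)
              omega
          · omega
        have hco : (Polynomial.C (c:ℚ) * binPoly (m-1) - Polynomial.C 2 * p1 - q).coeff (m-1)
            ≠ 0 := by
          rw [Polynomial.coeff_sub, Polynomial.coeff_sub, Polynomial.coeff_C_mul,
            Polynomial.coeff_C_mul, binPoly_coeff,
            Polynomial.coeff_eq_zero_of_natDegree_lt hp1deglt, hqcoeff]
          have hfacne : ((m-1).factorial : ℚ) ≠ 0 := by
            exact_mod_cast Nat.factorial_ne_zero (m-1)
          simp only [mul_zero, sub_zero]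
          have hpos : (0:ℚ) < (c:ℚ) * (1 / ((m-1).factorial : ℚ)) := by
            apply mul_pos hcpos
            positivity
          exact ne_of_gt hpos
        have := Polynomial.le_natDegree_of_ne_zero hco
        omega
      · intro n hn hsub
        have hmn : m + 1 ≤ n := by
          have := hsub hmS
          rw [mem_Icc] at this
          omega
        have hkey := rec_identity n m S1 hm2 hmn hS1
        rw [Finset.insert_erase hmS] at hkey
        have hkeyq : (n.choose (m-1) : ℚ) * (PP (m-1) S1 : ℚ) * (PP (n-m+1) ∅ : ℚ) =
            (PP n S : ℚ) + (PP n (insert (m-1) S1) : ℚ) + (PP n S1 : ℚ) := by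
          exact_mod_cast congrArg (fun x : ℕ => (x : ℚ)) hkey
        have hPPe : (PP (n-m+1) ∅ : ℚ) = 2 ^ (n - m) := by
          rw [PP_empty (n-m+1) (by omega), show n - m + 1 - 1 = n - m by omega]
          push_cast
          try ring
        have hPPS1 : (PP n S1 : ℚ) = p1.eval (n:ℚ) * (2 ^ (n - S.card - 1) * 2) := by
          rw [hp1val n hn (fun x hx => mem_Icc.mpr ⟨(hS1 x hx).1,
            by have := (hS1 x hx).2; omega⟩)]
          rw [show n - S1.card - 1 = (n - S.card - 1) + 1 by omega, pow_succ]
          try ring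
        have hPPS2 : (PP n (insert (m-1) S1) : ℚ) = q.eval (n:ℚ) * 2 ^ (n - S.card - 1) :=
          hqval n hn hsub
        have hpow : (2:ℚ) ^ (m - S.card - 1) * (2:ℚ) ^ (n - m) = 2 ^ (n - S.card - 1) := by
          rw [← pow_add]
          congr 1
          omega
        have hBn : (binPoly (m-1)).eval (n:ℚ) = (n.choose (m-1) : ℚ) := binPoly_eval_nat _ n
        have hPPS : (PP n S : ℚ) = (n.choose (m-1) : ℚ) * (PP (m-1) S1 : ℚ) *
            (PP (n-m+1) ∅ : ℚ) - (PP n (insert (m-1) S1) : ℚ) - (PP n S1 : ℚ) := by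
          linarith [hkeyq]
        rw [hPPm, hPPe, hPPS2, hPPS1] at hPPS
        rw [hPPS, eval_sub, eval_sub, eval_mul, eval_mul, eval_C, eval_C, hBn]
        linear_combination ((n.choose (m-1) : ℚ)) * (c:ℚ) * hpow

end Main


/-- `#P_B(S,n) = p(n)·2^(2n-s-1)` for an integer-valued polynomial `p`
of degree `max S - 1` (degree `0` if `S = ∅`) depending only on `S`. -/
theorem stmt3 (S : Finset ℕ) (hcons : ∀ i ∈ S, i + 1 ∉ S) (h2 : ∀ i ∈ S, 2 ≤ i) :
    ∃ p : Polynomial ℚ,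
      (∀ k : ℤ, ∃ z : ℤ, p.eval (k : ℚ) = (z : ℚ)) ∧
      p.natDegree = S.sup id - 1 ∧
      ∀ n : ℕ, 1 ≤ n → S ⊆ Finset.Icc 2 (n - 1) →
        (PB n S : ℚ) = p.eval (n : ℚ) * 2 ^ (2 * n - S.card - 1) := by

  obtain ⟨p, hint, hdeg, hval⟩ := stmtPP (S.sup id) S rfl hcons h2
  refine ⟨p, hint, hdeg, ?_⟩
  intro n hn hsub
  have hcard : S.card + 1 ≤ n := by
    rcases S.eq_empty_or_nonempty with rfl | hne
    · simp
      omega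
    · have := Finset.card_le_card hsub
      rw [Nat.card_Icc] at this
      omega
  rw [PB_eq_two_pow_mul_PP]
  push_cast
  rw [hval n hn hsub]
  rw [show 2 * n - S.card - 1 = n + (n - S.card - 1) by omega, pow_add]
  ring
end

section
/- Let S be a nonempty admissible set with maximum element m, let S_1 = S \ {m} and S_2 = S_1 ∪ {m-1}. Then #P_B(S,n) + #P_B(S_2,n) + #P_B(S_1,n) = C(n, m-1) · #P_B(S_1, m-1) · #P_B(∅, n-m+1). -/
open Finset

private lemma cmp_iff {k n : ℕ} (f : Fin k → Fin n) (hf : StrictMono f)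
    (s₁ s₂ : Bool) (a b : Fin k) :
    (if s₁ then (-1:ℤ) else 1) * (((f a : ℕ) : ℤ) + 1) <
      (if s₂ then (-1:ℤ) else 1) * (((f b : ℕ) : ℤ) + 1) ↔
    (if s₁ then (-1:ℤ) else 1) * (((a : ℕ) : ℤ) + 1) <
      (if s₂ then (-1:ℤ) else 1) * (((b : ℕ) : ℤ) + 1) := by
  have h1 : ((f a : ℕ) < (f b : ℕ)) ↔ ((a : ℕ) < (b : ℕ)) := by
    rw [← Fin.lt_def, ← Fin.lt_def]; exact hf.lt_iff_lt
  have h2 : ((f b : ℕ) < (f a : ℕ)) ↔ ((b : ℕ) < (a : ℕ)) := by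
    rw [← Fin.lt_def, ← Fin.lt_def]; exact hf.lt_iff_lt
  cases s₁ <;> cases s₂ <;>
    simp only [Bool.false_eq_true, if_true, if_false, ite_true, ite_false, reduceIte] <;>
    omega

abbrev BP (n : ℕ) := Equiv.Perm (Fin n) × (Fin n → Bool)

abbrev Dom (n k : ℕ) := {s : Finset (Fin n) // s.card = k} × (BP k × BP (n - k))

private lemma compl_card_s4 {n k : ℕ} {T : Finset (Fin n)} (hT : T.card = k) :
    Tᶜ.card = n - k := by
  rw [Finset.card_compl, hT, Fintype.card_fin]

def phiFun (n k : ℕ) (x : Dom n k) : Fin n → Fin n := fun i =>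
  if h : (i : ℕ) < k then x.1.1.orderEmbOfFin x.1.2 (x.2.1.1 ⟨i, h⟩)
  else (x.1.1ᶜ).orderEmbOfFin (compl_card_s4 x.1.2)
      (x.2.2.1 ⟨(i : ℕ) - k, by have := i.isLt; omega⟩)

lemma phiFun_injective (n k : ℕ) (x : Dom n k) : Function.Injective (phiFun n k x) := by
  intro i j hij
  unfold phiFun at hij
  split_ifs at hij with h1 h2 h2
  · have h3 := (x.1.1.orderEmbOfFin x.1.2).injective hij
    have h4 := x.2.1.1.injective h3
    have h5 : (i : ℕ) = (j : ℕ) := by simpa using h4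
    exact Fin.ext h5
  · exfalso
    have m1 := Finset.orderEmbOfFin_mem x.1.1 x.1.2 (x.2.1.1 ⟨i, h1⟩)
    rw [hij] at m1
    exact (Finset.mem_compl.mp (Finset.orderEmbOfFin_mem (x.1.1ᶜ) (compl_card_s4 x.1.2)
      (x.2.2.1 ⟨(j : ℕ) - k, by have := j.isLt; omega⟩))) m1
  · exfalso
    have m1 := Finset.orderEmbOfFin_mem x.1.1 x.1.2 (x.2.1.1 ⟨j, h2⟩)
    rw [← hij] at m1
    exact (Finset.mem_compl.mp (Finset.orderEmbOfFin_mem (x.1.1ᶜ) (compl_card_s4 x.1.2)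
      (x.2.2.1 ⟨(i : ℕ) - k, by have := i.isLt; omega⟩))) m1
  · have h3 := (Finset.orderEmbOfFin (x.1.1ᶜ) (compl_card_s4 x.1.2)).injective hij
    have h4 := x.2.2.1.injective h3
    have h5 : (i : ℕ) - k = (j : ℕ) - k := by simpa using h4
    have hi := i.isLt; have hj := j.isLt
    exact Fin.ext (by omega)

noncomputable def phi (n k : ℕ) (x : Dom n k) : BP n :=
  (Equiv.ofBijective _ ((Finite.injective_iff_bijective).mp (phiFun_injective n k x)),
   fun i => if h : (i : ℕ) < k then x.2.1.2 ⟨i, h⟩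
     else x.2.2.2 ⟨(i : ℕ) - k, by have := i.isLt; omega⟩)

lemma phi_fst_apply (n k : ℕ) (x : Dom n k) (i : Fin n) :
    (phi n k x).1 i = phiFun n k x i := rfl

lemma mem_iff_phiFun (n k : ℕ) (hk : k ≤ n) (x : Dom n k) (v : Fin n) :
    v ∈ x.1.1 ↔ ∃ i : Fin n, (i : ℕ) < k ∧ phiFun n k x i = v := by
  constructor
  · intro hv
    have hr : v ∈ Set.range (x.1.1.orderEmbOfFin x.1.2) := by
      rw [Finset.range_orderEmbOfFin]; exact hv
    obtain ⟨j, hj⟩ := hr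
    refine ⟨⟨(x.2.1.1.symm j : Fin k), lt_of_lt_of_le (x.2.1.1.symm j).isLt hk⟩,
      (x.2.1.1.symm j).isLt, ?_⟩
    have hlt : ((⟨(x.2.1.1.symm j : Fin k), lt_of_lt_of_le (x.2.1.1.symm j).isLt hk⟩ : Fin n) : ℕ) < k :=
      (x.2.1.1.symm j).isLt
    rw [phiFun, dif_pos hlt]
    have : (⟨((x.2.1.1.symm j : Fin k) : ℕ), hlt⟩ : Fin k) = x.2.1.1.symm j := Fin.ext rfl
    rw [this, Equiv.apply_symm_apply]
    exact hj
  · rintro ⟨i, hi, rfl⟩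
    rw [phiFun, dif_pos hi]
    exact Finset.orderEmbOfFin_mem _ _ _

lemma phi_injective (n k : ℕ) (hk : k ≤ n) : Function.Injective (phi n k) := by
  intro x y hxy
  have hperm : ∀ i, phiFun n k x i = phiFun n k y i := by
    intro i
    have h1 : (phi n k x).1 = (phi n k y).1 := congrArg Prod.fst hxy
    exact DFunLike.congr_fun h1 i
  have hbool : ∀ i : Fin n, (phi n k x).2 i = (phi n k y).2 i := by
    intro i
    have h1 : (phi n k x).2 = (phi n k y).2 := congrArg Prod.snd hxy
    exact congrFun h1 i
  obtain ⟨⟨T, hT⟩, ⟨σ, bσ⟩, ⟨τ, bτ⟩⟩ := x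
  obtain ⟨⟨T', hT'⟩, ⟨σ', bσ'⟩, ⟨τ', bτ'⟩⟩ := y
  have hTT : T = T' := by
    ext v
    rw [mem_iff_phiFun n k hk ⟨⟨T, hT⟩, (σ, bσ), (τ, bτ)⟩ v,
        mem_iff_phiFun n k hk ⟨⟨T', hT'⟩, (σ', bσ'), (τ', bτ')⟩ v]
    simp only [hperm]
  subst hTT
  have hσ : σ = σ' := by
    apply Equiv.ext
    intro j
    have h := hperm ⟨(j : ℕ), lt_of_lt_of_le j.isLt hk⟩
    simp only [phiFun, dif_pos (show ((⟨(j : ℕ), lt_of_lt_of_le j.isLt hk⟩ : Fin n) : ℕ) < k from j.isLt)] at h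
    have h2 := (T.orderEmbOfFin hT).injective h
    simpa using h2
  have hτ : τ = τ' := by
    apply Equiv.ext
    intro j
    have hjn : k + (j : ℕ) < n := by have := j.isLt; omega
    have h := hperm ⟨k + (j : ℕ), hjn⟩
    simp only [phiFun, dif_neg (show ¬ ((⟨k + (j : ℕ), hjn⟩ : Fin n) : ℕ) < k by simp)] at h
    have h2 := (Finset.orderEmbOfFin (Tᶜ) (compl_card_s4 hT)).injective h
    have h3 : (⟨k + (j : ℕ) - k, by have := j.isLt; omega⟩ : Fin (n - k)) = j := by
      apply Fin.ext; simp
    rw [h3] at h2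
    convert h2 using 2
  have hbσ : bσ = bσ' := by
    funext j
    have h := hbool ⟨(j : ℕ), lt_of_lt_of_le j.isLt hk⟩
    simp only [phi, dif_pos (show ((⟨(j : ℕ), lt_of_lt_of_le j.isLt hk⟩ : Fin n) : ℕ) < k from j.isLt)] at h
    simpa using h
  have hbτ : bτ = bτ' := by
    funext j
    have hjn : k + (j : ℕ) < n := by have := j.isLt; omega
    have h := hbool ⟨k + (j : ℕ), hjn⟩
    simp only [phi, dif_neg (show ¬ ((⟨k + (j : ℕ), hjn⟩ : Fin n) : ℕ) < k by simp)] at h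
    have h3 : (⟨k + (j : ℕ) - k, by have := j.isLt; omega⟩ : Fin (n - k)) = j := by
      apply Fin.ext; simp
    rw [h3] at h
    convert h using 2
  subst hσ hτ hbσ hbτ
  rfl

lemma card_dom (n k : ℕ) (hk : k ≤ n) : Fintype.card (Dom n k) = Fintype.card (BP n) := by
  have hfac := Nat.choose_mul_factorial_mul_factorial hk
  have hpow : (2:ℕ) ^ k * 2 ^ (n - k) = 2 ^ n := by rw [← pow_add]; congr 1; omega
  simp only [Fintype.card_prod, Fintype.card_perm, Fintype.card_fun, Fintype.card_finset_len,
    Fintype.card_fin, Fintype.card_bool]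
  rw [← hfac, ← hpow]
  ring

lemma phi_bijective (n k : ℕ) (hk : k ≤ n) : Function.Bijective (phi n k) :=
  (Fintype.bijective_iff_injective_and_card _).mpr ⟨phi_injective n k hk, card_dom n k hk⟩

lemma lt_lo {n k : ℕ} (hk : k ≤ n) (x : Dom n k) {p q : ℕ}
    (hp1 : 1 ≤ p) (hpk : p ≤ k) (hq1 : 1 ≤ q) (hqk : q ≤ k) :
    (bval n (phi n k x) p < bval n (phi n k x) q ↔ bval k x.2.1 p < bval k x.2.1 q) := by
  have hpn : p - 1 < n := by omega
  have hqn : q - 1 < n := by omega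
  have hpk' : p - 1 < k := by omega
  have hqk' : q - 1 < k := by omega
  rw [bval, bval, bval, bval, dif_pos hpn, dif_pos hqn, dif_pos hpk', dif_pos hqk']
  have e1 : ∀ (h : p - 1 < n), (phi n k x).1 ⟨p - 1, h⟩ =
      x.1.1.orderEmbOfFin x.1.2 (x.2.1.1 ⟨p - 1, hpk'⟩) := by
    intro h
    rw [phi_fst_apply]
    simp only [phiFun, dif_pos (show ((⟨p - 1, h⟩ : Fin n) : ℕ) < k from hpk')]
  have e2 : ∀ (h : p - 1 < n), (phi n k x).2 ⟨p - 1, h⟩ = x.2.1.2 ⟨p - 1, hpk'⟩ := by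
    intro h
    simp only [phi, dif_pos (show ((⟨p - 1, h⟩ : Fin n) : ℕ) < k from hpk')]
  have e3 : ∀ (h : q - 1 < n), (phi n k x).1 ⟨q - 1, h⟩ =
      x.1.1.orderEmbOfFin x.1.2 (x.2.1.1 ⟨q - 1, hqk'⟩) := by
    intro h
    rw [phi_fst_apply]
    simp only [phiFun, dif_pos (show ((⟨q - 1, h⟩ : Fin n) : ℕ) < k from hqk')]
  have e4 : ∀ (h : q - 1 < n), (phi n k x).2 ⟨q - 1, h⟩ = x.2.1.2 ⟨q - 1, hqk'⟩ := by
    intro h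
    simp only [phi, dif_pos (show ((⟨q - 1, h⟩ : Fin n) : ℕ) < k from hqk')]
  rw [e1, e2, e3, e4]
  exact cmp_iff _ (x.1.1.orderEmbOfFin x.1.2).strictMono _ _ _ _

lemma lt_hi {n k : ℕ} (hk : k ≤ n) (x : Dom n k) {p q : ℕ}
    (hp1 : k + 1 ≤ p) (hpn : p ≤ n) (hq1 : k + 1 ≤ q) (hqn : q ≤ n) :
    (bval n (phi n k x) p < bval n (phi n k x) q ↔
      bval (n - k) x.2.2 (p - k) < bval (n - k) x.2.2 (q - k)) := by
  have hpn' : p - 1 < n := by omega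
  have hqn' : q - 1 < n := by omega
  have hpk' : p - k - 1 < n - k := by omega
  have hqk' : q - k - 1 < n - k := by omega
  rw [bval, bval, bval, bval, dif_pos hpn', dif_pos hqn', dif_pos hpk', dif_pos hqk']
  have e1 : ∀ (h : p - 1 < n), (phi n k x).1 ⟨p - 1, h⟩ =
      (x.1.1ᶜ).orderEmbOfFin (compl_card_s4 x.1.2) (x.2.2.1 ⟨p - k - 1, hpk'⟩) := by
    intro h
    rw [phi_fst_apply]
    simp only [phiFun, dif_neg (show ¬ ((⟨p - 1, h⟩ : Fin n) : ℕ) < k by show ¬ p - 1 < k; omega)]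
    exact congrArg _ (congrArg _ (Fin.ext (show p - 1 - k = p - k - 1 by omega)))
  have e2 : ∀ (h : p - 1 < n), (phi n k x).2 ⟨p - 1, h⟩ = x.2.2.2 ⟨p - k - 1, hpk'⟩ := by
    intro h
    simp only [phi, dif_neg (show ¬ ((⟨p - 1, h⟩ : Fin n) : ℕ) < k by show ¬ p - 1 < k; omega)]
    exact congrArg _ (Fin.ext (show p - 1 - k = p - k - 1 by omega))
  have e3 : ∀ (h : q - 1 < n), (phi n k x).1 ⟨q - 1, h⟩ =
      (x.1.1ᶜ).orderEmbOfFin (compl_card_s4 x.1.2) (x.2.2.1 ⟨q - k - 1, hqk'⟩) := by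
    intro h
    rw [phi_fst_apply]
    simp only [phiFun, dif_neg (show ¬ ((⟨q - 1, h⟩ : Fin n) : ℕ) < k by show ¬ q - 1 < k; omega)]
    exact congrArg _ (congrArg _ (Fin.ext (show q - 1 - k = q - k - 1 by omega)))
  have e4 : ∀ (h : q - 1 < n), (phi n k x).2 ⟨q - 1, h⟩ = x.2.2.2 ⟨q - k - 1, hqk'⟩ := by
    intro h
    simp only [phi, dif_neg (show ¬ ((⟨q - 1, h⟩ : Fin n) : ℕ) < k by show ¬ q - 1 < k; omega)]
    exact congrArg _ (Fin.ext (show q - 1 - k = q - k - 1 by omega))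
  rw [e1, e2, e3, e4]
  exact cmp_iff _ ((x.1.1ᶜ).orderEmbOfFin (compl_card_s4 x.1.2)).strictMono _ _ _ _

lemma peak_lo {n k : ℕ} (hk : k ≤ n) (x : Dom n k) {i : ℕ} (h2 : 2 ≤ i) (hik : i + 1 ≤ k) :
    (i ∈ bPeakSet n (phi n k x) ↔ i ∈ bPeakSet k x.2.1) := by
  have hn : 3 ≤ n := by omega
  unfold bPeakSet
  simp only [Finset.mem_filter, Finset.mem_Icc]
  rw [lt_lo hk x (by omega) (by omega) (by omega) (by omega),
      lt_lo hk x (by omega) (by omega) (by omega) (by omega)]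
  constructor
  · rintro ⟨-, h⟩; exact ⟨⟨by omega, by omega⟩, h⟩
  · rintro ⟨-, h⟩; exact ⟨⟨by omega, by omega⟩, h⟩

lemma peak_hi {n k : ℕ} (hk : k ≤ n) (x : Dom n k) {i : ℕ} (h2 : k + 2 ≤ i) (hin : i ≤ n - 1) :
    (i ∈ bPeakSet n (phi n k x) ↔ i - k ∈ bPeakSet (n - k) x.2.2) := by
  have hn : k + 3 ≤ n := by omega
  unfold bPeakSet
  simp only [Finset.mem_filter, Finset.mem_Icc]
  rw [lt_hi hk x (p := i - 1) (q := i) (by omega) (by omega) (by omega) (by omega),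
      lt_hi hk x (p := i + 1) (q := i) (by omega) (by omega) (by omega) (by omega)]
  rw [show i - 1 - k = i - k - 1 by omega, show i + 1 - k = i - k + 1 by omega]
  constructor
  · rintro ⟨-, h⟩; exact ⟨⟨by omega, by omega⟩, h⟩
  · rintro ⟨-, h⟩; exact ⟨⟨by omega, by omega⟩, h⟩

lemma no_two {n : ℕ} (π : BP n) (i : ℕ) (h1 : i ∈ bPeakSet n π)
    (h2 : i + 1 ∈ bPeakSet n π) : False := by
  unfold bPeakSet at h1 h2
  simp only [Finset.mem_filter, Finset.mem_Icc, Nat.add_sub_cancel] at h1 h2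
  have a1 := h1.2.2
  have a2 := h2.2.1
  omega

lemma peak_subset {n : ℕ} (π : BP n) : bPeakSet n π ⊆ Finset.Icc 2 (n - 1) :=
  Finset.filter_subset _ _

lemma key {n m k : ℕ} (hm : 2 ≤ m) (hmn : m ≤ n - 1) (hkm : k = m - 1) (hn3 : 3 ≤ n)
    (S : Finset ℕ) (hmem : m ∈ S) (hmax : ∀ j ∈ S, j ≤ m)
    (hS : S ⊆ Finset.Icc 2 (n - 1)) (hcons : ∀ i ∈ S, i + 1 ∉ S)
    (x : Dom n k) :
    (bPeakSet n (phi n k x) = S ∨ bPeakSet n (phi n k x) = S.erase m ∪ {m - 1} ∨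
      bPeakSet n (phi n k x) = S.erase m)
    ↔ (bPeakSet k x.2.1 = S.erase m ∧ bPeakSet (n - k) x.2.2 = ∅) := by
  have hkn : k ≤ n := by omega
  have hS1 : ∀ j ∈ S.erase m, 2 ≤ j ∧ j + 1 ≤ k := by
    intro j hj
    obtain ⟨hjm, hjS⟩ := Finset.mem_erase.mp hj
    have h1 := Finset.mem_Icc.mp (hS hjS)
    have h2 := hmax j hjS
    have h3 : j ≠ m - 1 := by
      intro hjeq
      exact hcons j hjS (by rw [hjeq]; rw [Nat.sub_add_cancel (by omega)]; exact hmem)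
    constructor <;> omega
  set A := bPeakSet n (phi n k x) with hA
  have hsub : A ⊆ Finset.Icc 2 (n - 1) := peak_subset _
  constructor
  · intro h
    have hinA : ∀ j ∈ S.erase m, j ∈ A := by
      intro j hj
      rcases h with h | h | h <;> rw [h]
      · exact (Finset.mem_erase.mp hj).2
      · exact Finset.mem_union_left _ hj
      · exact hj
    have hAm : ∀ j ∈ A, j ≤ m := by
      intro j hj
      rcases h with h | h | h <;> rw [h] at hj
      · exact hmax j hj
      · rcases Finset.mem_union.mp hj with h' | h'
        · exact le_trans (hmax j (Finset.mem_erase.mp h').2) le_rfl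
        · have := Finset.mem_singleton.mp h'; omega
      · exact hmax j (Finset.mem_erase.mp hj).2
    constructor
    · ext j
      constructor
      · intro hj
        have hjb := Finset.mem_Icc.mp (Finset.filter_subset _ _ hj)
        have hjA : j ∈ A := (peak_lo hkn x hjb.1 (by omega)).mpr hj
        rcases h with h | h | h <;> rw [h] at hjA
        · exact Finset.mem_erase.mpr ⟨by omega, hjA⟩
        · rcases Finset.mem_union.mp hjA with h' | h'
          · exact h'
          · have := Finset.mem_singleton.mp h'; omega
        · exact hjA
      · intro hj
        obtain ⟨hj2, hjk⟩ := hS1 j hj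
        exact (peak_lo hkn x hj2 hjk).mp (hinA j hj)
    · rw [Finset.eq_empty_iff_forall_notMem]
      intro j hj
      have hjb := Finset.mem_Icc.mp (Finset.filter_subset _ _ hj)
      have hiA : j + k ∈ A := by
        have := (peak_hi hkn x (i := j + k) (by omega) (by omega)).mpr
          (by rwa [Nat.add_sub_cancel])
        exact this
      have := hAm _ hiA
      omega
  · rintro ⟨hσ, hτ⟩
    have hAlo : ∀ j, 2 ≤ j → j + 1 ≤ k → (j ∈ A ↔ j ∈ S.erase m) := by
      intro j h1 h2
      rw [hA, peak_lo hkn x h1 h2, hσ]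
    have hAhi : ∀ j, k + 2 ≤ j → j ≤ n - 1 → j ∉ A := by
      intro j h1 h2 hj
      have := (peak_hi hkn x h1 h2).mp hj
      rw [hτ] at this
      exact absurd this (Finset.notMem_empty _)
    have hnotboth : ¬ (k ∈ A ∧ k + 1 ∈ A) := fun ⟨a, b⟩ => no_two _ k a b
    by_cases hk1A : k + 1 ∈ A
    · left
      ext j
      constructor
      · intro hj
        have hjb := Finset.mem_Icc.mp (hsub hj)
        by_cases hc1 : j + 1 ≤ k
        · exact (Finset.mem_erase.mp ((hAlo j hjb.1 hc1).mp hj)).2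
        · by_cases hc2 : j = k
          · exact absurd ⟨hc2 ▸ hj, hk1A⟩ hnotboth
          · by_cases hc3 : j = k + 1
            · rw [hc3]; rw [show k + 1 = m by omega]; exact hmem
            · exact absurd hj (hAhi j (by omega) hjb.2)
      · intro hj
        by_cases hc : j = m
        · rwa [hc, show m = k + 1 by omega]
        · have hj' : j ∈ S.erase m := Finset.mem_erase.mpr ⟨hc, hj⟩
          obtain ⟨h1, h2⟩ := hS1 j hj'
          exact (hAlo j h1 h2).mpr hj'
    · by_cases hkA : k ∈ A
      · right; left
        ext j
        constructor
        · intro hj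
          have hjb := Finset.mem_Icc.mp (hsub hj)
          by_cases hc1 : j + 1 ≤ k
          · exact Finset.mem_union_left _ ((hAlo j hjb.1 hc1).mp hj)
          · by_cases hc2 : j = k
            · exact Finset.mem_union_right _ (Finset.mem_singleton.mpr (by omega))
            · by_cases hc3 : j = k + 1
              · exact absurd (hc3 ▸ hj) hk1A
              · exact absurd hj (hAhi j (by omega) hjb.2)
        · intro hj
          rcases Finset.mem_union.mp hj with h' | h'
          · obtain ⟨h1, h2⟩ := hS1 j h'
            exact (hAlo j h1 h2).mpr h'
          · have : j = k := by have := Finset.mem_singleton.mp h'; omega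
            rwa [this]
      · right; right
        ext j
        constructor
        · intro hj
          have hjb := Finset.mem_Icc.mp (hsub hj)
          by_cases hc1 : j + 1 ≤ k
          · exact (hAlo j hjb.1 hc1).mp hj
          · by_cases hc2 : j = k
            · exact absurd (hc2 ▸ hj) hkA
            · by_cases hc3 : j = k + 1
              · exact absurd (hc3 ▸ hj) hk1A
              · exact absurd hj (hAhi j (by omega) hjb.2)
        · intro hj
          obtain ⟨h1, h2⟩ := hS1 j hj
          exact (hAlo j h1 h2).mpr hj

/-- with `m = max S`, `S₁ = S \ {m}`, `S₂ = S₁ ∪ {m-1}`,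
`#P_B(S,n) + #P_B(S₂,n) + #P_B(S₁,n) = C(n,m-1)·#P_B(S₁,m-1)·#P_B(∅,n-m+1)`. -/
theorem stmt4 (n : ℕ) (S : Finset ℕ) (hne : S.Nonempty)
    (hS : S ⊆ Finset.Icc 2 (n - 1)) (hcons : ∀ i ∈ S, i + 1 ∉ S) :
    PB n S + PB n (S.erase (S.max' hne) ∪ {S.max' hne - 1}) + PB n (S.erase (S.max' hne))
      = Nat.choose n (S.max' hne - 1) * PB (S.max' hne - 1) (S.erase (S.max' hne))
          * PB (n - S.max' hne + 1) ∅ := by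
  classical
  set m := S.max' hne with hm
  have hmem : m ∈ S := S.max'_mem hne
  have hmax : ∀ j ∈ S, j ≤ m := fun j hj => S.le_max' j hj
  have hb := Finset.mem_Icc.mp (hS hmem)
  have hn3 : 3 ≤ n := by omega
  set k := m - 1 with hkm
  have hkn : k ≤ n := by omega
  have hnk : n - m + 1 = n - k := by omega
  rw [hnk]
  have hm1S : m - 1 ∉ S := fun h =>
    hcons (m - 1) h (by rwa [Nat.sub_add_cancel (by omega)])
  have e1 : m ∉ S.erase m ∪ {m - 1} := by
    rw [Finset.mem_union]
    rintro (h | h)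
    · exact Finset.notMem_erase _ _ h
    · have := Finset.mem_singleton.mp h; omega
  have e2 : m ∉ S.erase m := Finset.notMem_erase _ _
  have e3 : (m - 1 : ℕ) ∈ S.erase m ∪ {m - 1} := Finset.mem_union_right _ (Finset.mem_singleton_self _)
  have e4 : (m - 1 : ℕ) ∉ S.erase m := fun h => hm1S (Finset.mem_erase.mp h).2
  set U := Finset.univ.filter (fun π : BP n => bPeakSet n π = S ∨
      bPeakSet n π = S.erase m ∪ {m - 1} ∨ bPeakSet n π = S.erase m) with hUdef
  set W := Finset.univ.filter (fun x : Dom n k =>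
      bPeakSet k x.2.1 = S.erase m ∧ bPeakSet (n - k) x.2.2 = ∅) with hWdef
  have hU : U.card = PB n S + PB n (S.erase m ∪ {m - 1}) + PB n (S.erase m) := by
    rw [hUdef, Finset.filter_or, Finset.filter_or, Finset.card_union_of_disjoint,
        Finset.card_union_of_disjoint]
    · simp only [PB, Finset.filter_congr_decidable]; ring
    · rw [Finset.disjoint_left]
      intro a ha hb'
      have h1 := (Finset.mem_filter.mp ha).2
      have h2 := (Finset.mem_filter.mp hb').2
      rw [h1] at h2
      exact e4 (h2 ▸ e3)
    · rw [Finset.disjoint_left]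
      intro a ha hb'
      have h1 := (Finset.mem_filter.mp ha).2
      rcases Finset.mem_union.mp hb' with h2 | h2 <;>
        have h3 := (Finset.mem_filter.mp h2).2
      · rw [h1] at h3; exact e1 (h3 ▸ hmem)
      · rw [h1] at h3; exact e2 (h3 ▸ hmem)
  have hUW : W.card = U.card := by
    apply Finset.card_bij (i := fun x _ => phi n k x)
    · intro x hx
      have hx' := (Finset.mem_filter.mp hx).2
      rw [hUdef, Finset.mem_filter]
      refine ⟨Finset.mem_univ _, ?_⟩
      exact (key (by omega) (by omega) hkm hn3 S hmem hmax hS hcons x).mpr hx'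
    · intro x _ y _ hxy
      exact phi_injective n k hkn hxy
    · intro π hπ
      obtain ⟨x, hx⟩ := (phi_bijective n k hkn).surjective π
      refine ⟨x, ?_, hx⟩
      rw [hWdef, Finset.mem_filter]
      refine ⟨Finset.mem_univ _, ?_⟩
      apply (key (by omega) (by omega) hkm hn3 S hmem hmax hS hcons x).mp
      rw [hx]
      exact (Finset.mem_filter.mp hπ).2
  have hW : W.card = Nat.choose n k * PB k (S.erase m) * PB (n - k) ∅ := by
    rw [hWdef]
    rw [show (Finset.univ : Finset (Dom n k)) = Finset.univ ×ˢ Finset.univ from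
      (Finset.univ_product_univ).symm]
    rw [Finset.filter_product_right
      (fun y : BP k × BP (n - k) => bPeakSet k y.1 = S.erase m ∧ bPeakSet (n - k) y.2 = ∅)]
    rw [Finset.card_product]
    rw [show (Finset.univ : Finset (BP k × BP (n - k))) = Finset.univ ×ˢ Finset.univ from
      (Finset.univ_product_univ).symm]
    rw [Finset.filter_product (fun y : BP k => bPeakSet k y = S.erase m)
      (fun y : BP (n - k) => bPeakSet (n - k) y = ∅)]
    rw [Finset.card_product]
    rw [Finset.card_univ, Fintype.card_finset_len, Fintype.card_fin]
    simp only [PB, Finset.filter_congr_decidable]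
    ring
  rw [← hU, ← hUW, hW]
end

section
/- If S = {m} is admissible (2 ≤ m ≤ n-1), then the number of signed permutations in B_n with peak set {m} equals (C(n-1,m-1) - 1)·2^{2n-2}. -/
open Finset

/-!
A signed permutation is the same as a choice of sign for each absolute value together with an
arrangement of the resulting `n`-element set of integers, and its peak set depends only on the
relative order of its entries. So each of the `2^n` sign choices contributes the number of
arrangements of an `n`-element chain with peak set `{m}`.

That number is computed by removing the maximum `M`: in `l₁ ++ M :: l₂` the peaks are those of
`l₁`, those of `l₂` shifted by `|l₁| + 1`, and the position of `M` itself unless `M` is at an end.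
Hence there are `2^(n-1)` peak-free arrangements, and an arrangement with single peak `m` either
has `M` at the peak with both sides peak-free (`C(n-1, m-1) · 2^(n-3)` ways) or has `M` at an end;
Pascal's rule then closes the induction at `(C(n-1, m-1) - 1) · 2^(n-2)`.
-/

namespace List

variable {α : Type*} [LinearOrder α]

/-- Positions are 1-indexed, as in `bPeakSet`: position `i` holds `l[i - 1]`. -/
def peaks (l : List α) : Finset ℕ :=
  (Finset.range l.length).filter fun i =>
    2 ≤ i ∧ ∃ h : i < l.length, l[i - 2] < l[i - 1] ∧ l[i] < l[i - 1]

theorem mem_peaks {l : List α} {i : ℕ} :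
    i ∈ l.peaks ↔ 2 ≤ i ∧ ∃ h : i < l.length, l[i - 2] < l[i - 1] ∧ l[i] < l[i - 1] := by
  simp only [peaks, Finset.mem_filter, Finset.mem_range, and_iff_right_iff_imp]
  exact fun ⟨_, h, _⟩ => h

@[simp]
theorem peaks_nil : ([] : List α).peaks = ∅ := rfl

theorem two_le_of_mem_peaks {l : List α} {i : ℕ} (hi : i ∈ l.peaks) : 2 ≤ i :=
  (mem_peaks.1 hi).1

theorem lt_length_of_mem_peaks {l : List α} {i : ℕ} (hi : i ∈ l.peaks) : i < l.length :=
  (mem_peaks.1 hi).2.1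

theorem mem_peaks_append_left {l₁ l₂ : List α} {i : ℕ} (hi : i < l₁.length) :
    i ∈ (l₁ ++ l₂).peaks ↔ i ∈ l₁.peaks := by
  simp only [mem_peaks, length_append, getElem_append, show i - 2 < l₁.length by omega,
    show i - 1 < l₁.length by omega, hi, dite_true]
  exact ⟨fun ⟨h2, _, h⟩ => ⟨h2, trivial, h⟩, fun ⟨h2, _, h⟩ => ⟨h2, by omega, h⟩⟩

theorem mem_peaks_append_right {l₁ l₂ : List α} {i : ℕ} (hi : l₁.length + 2 ≤ i) :
    i ∈ (l₁ ++ l₂).peaks ↔ i - l₁.length ∈ l₂.peaks := by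
  simp only [mem_peaks, length_append, getElem_append, show ¬ i - 2 < l₁.length by omega,
    show ¬ i - 1 < l₁.length by omega, show ¬ i < l₁.length by omega, dite_false,
    show i - 2 - l₁.length = i - l₁.length - 2 by omega,
    show i - 1 - l₁.length = i - l₁.length - 1 by omega]
  exact ⟨fun ⟨_, _, h⟩ => ⟨by omega, by omega, h⟩, fun ⟨_, _, h⟩ => ⟨by omega, by omega, h⟩⟩

theorem peaks_cons_of_forall_lt {M : α} {l : List α} (hM : ∀ x ∈ l, x < M) :
    (M :: l).peaks = l.peaks.map (addRightEmbedding 1) := by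
  ext i
  simp only [Finset.mem_map, addRightEmbedding_apply]
  rcases Nat.lt_or_ge i 3 with hi | hi
  · constructor
    · intro hp
      obtain ⟨h2, h, hlt, -⟩ := mem_peaks.1 hp
      obtain rfl : i = 2 := by omega
      simp only [Nat.sub_self, getElem_cons_zero, Nat.add_one_sub_one, getElem_cons_succ] at hlt
      exact absurd (hM _ (getElem_mem _)) (not_lt.2 hlt.le)
    · rintro ⟨j, hj, rfl⟩
      have := two_le_of_mem_peaks hj
      omega
  · rw [← singleton_append, mem_peaks_append_right (by simpa using hi)]
    constructor
    · exact fun h => ⟨i - 1, by simpa using h, by omega⟩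
    · rintro ⟨j, hj, rfl⟩
      simpa using hj

theorem length_notMem_peaks_append_cons {l₁ l₂ : List α} {M : α} (h₁ : ∀ x ∈ l₁, x < M) :
    l₁.length ∉ (l₁ ++ M :: l₂).peaks := fun h => by
  obtain ⟨h2, h, -, hlt⟩ := mem_peaks.1 h
  simp only [getElem_append, lt_irrefl, dite_false, Nat.sub_self, getElem_cons_zero,
    show l₁.length - 1 < l₁.length by omega, dite_true] at hlt
  exact absurd (h₁ _ (getElem_mem _)) (not_lt.2 hlt.le)

theorem length_add_one_mem_peaks_append_cons_iff {l₁ l₂ : List α} {M : α}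
    (h₁ : ∀ x ∈ l₁, x < M) (h₂ : ∀ x ∈ l₂, x < M) :
    l₁.length + 1 ∈ (l₁ ++ M :: l₂).peaks ↔ l₁ ≠ [] ∧ l₂ ≠ [] := by
  simp only [mem_peaks, length_append, length_cons, getElem_append, Nat.add_sub_cancel, lt_irrefl,
    dite_false, Nat.sub_self, getElem_cons_zero, show l₁.length + 1 - 2 = l₁.length - 1 by omega,
    show l₁.length + 1 - l₁.length = 0 + 1 by omega, getElem_cons_succ]
  constructor
  · rintro ⟨_, _, -⟩
    exact ⟨ne_nil_of_length_pos (by omega), ne_nil_of_length_pos (by omega)⟩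
  · rintro ⟨hne₁, hne₂⟩
    have := length_pos_of_ne_nil hne₁
    have := length_pos_of_ne_nil hne₂
    refine ⟨by omega, by omega, ?_, ?_⟩
    · rw [dif_pos (by omega)]
      exact h₁ _ (getElem_mem _)
    · rw [dif_neg (by omega)]
      exact h₂ _ (getElem_mem _)

theorem peaks_append_cons_of_forall_lt {l₁ l₂ : List α} {M : α} (h₁ : ∀ x ∈ l₁, x < M)
    (h₂ : ∀ x ∈ l₂, x < M) :
    (l₁ ++ M :: l₂).peaks = l₁.peaks ∪ (if l₁ = [] ∨ l₂ = [] then ∅ else {l₁.length + 1}) ∪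
      l₂.peaks.map (addRightEmbedding (l₁.length + 1)) := by
  have hjunction : ∀ i, i ∈ (if l₁ = [] ∨ l₂ = [] then ∅ else {l₁.length + 1} : Finset ℕ) ↔
      i = l₁.length + 1 ∧ l₁ ≠ [] ∧ l₂ ≠ [] := by
    intro i
    split_ifs <;> simp <;> tauto
  ext i
  simp only [Finset.mem_union, Finset.mem_map, addRightEmbedding_apply, hjunction]
  rcases Nat.lt_or_ge i l₁.length with hi | hi
  · rw [mem_peaks_append_left hi]
    constructor
    · exact fun h => Or.inl (Or.inl h)
    · rintro ((h | h) | ⟨j, -, rfl⟩) <;> first | exact h | omega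
  have hl₁ : i ∉ l₁.peaks := fun h => by have := lt_length_of_mem_peaks h; omega
  rcases (by omega : i = l₁.length ∨ i = l₁.length + 1 ∨ l₁.length + 2 ≤ i) with rfl | rfl | hi'
  · refine iff_of_false (length_notMem_peaks_append_cons h₁) ?_
    rintro ((h | h) | ⟨j, hj, hj'⟩)
    · exact hl₁ h
    · omega
    · omega
  · rw [length_add_one_mem_peaks_append_cons_iff h₁ h₂]
    constructor
    · exact fun h => Or.inl (Or.inr ⟨rfl, h⟩)
    · rintro ((h | ⟨-, h⟩) | ⟨j, hj, hj'⟩)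
      · exact absurd h hl₁
      · exact h
      · have := two_le_of_mem_peaks hj
        omega
  · rw [mem_peaks_append_right hi', peaks_cons_of_forall_lt h₂]
    simp only [Finset.mem_map, addRightEmbedding_apply, show i ≠ l₁.length + 1 by omega,
      false_and, hl₁, or_false, false_or]
    exact exists_congr fun j => and_congr_right fun _ => by omega

theorem peaks_cons_eq_singleton_iff {M : α} {l : List α} (hM : ∀ x ∈ l, x < M) {m : ℕ}
    (hm : 1 ≤ m) : (M :: l).peaks = {m} ↔ l.peaks = {m - 1} := by
  have : ({m} : Finset ℕ) = ({m - 1} : Finset ℕ).map (addRightEmbedding 1) := by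
    rw [Finset.map_singleton, addRightEmbedding_apply, Nat.sub_add_cancel hm]
  rw [peaks_cons_of_forall_lt hM, this, Finset.map_inj]

theorem peaks_append_singleton_of_forall_lt {l : List α} {M : α} (hM : ∀ x ∈ l, x < M) :
    (l ++ [M]).peaks = l.peaks := by
  simpa using peaks_append_cons_of_forall_lt hM (l₂ := []) (by simp)

theorem peaks_append_cons_eq_empty_iff {l₁ l₂ : List α} {M : α} (h₁ : ∀ x ∈ l₁, x < M)
    (h₂ : ∀ x ∈ l₂, x < M) :
    (l₁ ++ M :: l₂).peaks = ∅ ↔ (l₁ = [] ∨ l₂ = []) ∧ l₁.peaks = ∅ ∧ l₂.peaks = ∅ := by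
  rw [peaks_append_cons_of_forall_lt h₁ h₂]
  split_ifs with h <;> simp [h]

theorem peaks_append_cons_eq_singleton_iff {l₁ l₂ : List α} {M : α} (h₁ : ∀ x ∈ l₁, x < M)
    (h₂ : ∀ x ∈ l₂, x < M) (hl₁ : l₁ ≠ []) (hl₂ : l₂ ≠ []) {m : ℕ} :
    (l₁ ++ M :: l₂).peaks = {m} ↔ l₁.length + 1 = m ∧ l₁.peaks = ∅ ∧ l₂.peaks = ∅ := by
  rw [peaks_append_cons_of_forall_lt h₁ h₂, if_neg (by tauto)]
  constructor
  · intro h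
    have hm : ∀ i, i ∈ l₁.peaks ∨ i = l₁.length + 1 ∨ (∃ j ∈ l₂.peaks, j + (l₁.length + 1) = i) →
        i = m := fun i hi => by
      rw [← Finset.mem_singleton, ← h]
      simp only [Finset.mem_union, Finset.mem_singleton, Finset.mem_map, addRightEmbedding_apply]
      tauto
    refine ⟨hm _ (Or.inr (Or.inl rfl)), Finset.eq_empty_of_forall_notMem fun i hi => ?_,
      Finset.eq_empty_of_forall_notMem fun j hj => ?_⟩
    · have := hm _ (Or.inr (Or.inl rfl))
      have := hm i (Or.inl hi)
      have := lt_length_of_mem_peaks hi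
      omega
    · have := hm _ (Or.inr (Or.inl rfl))
      have := hm _ (Or.inr (Or.inr ⟨j, hj, rfl⟩))
      have := two_le_of_mem_peaks hj
      omega
  · rintro ⟨rfl, h₁', h₂'⟩
    simp [h₁', h₂']

end List

namespace Finset

variable {α : Type*}

def arrangements (V : Finset α) : Finset (List α) :=
  ⟨V.val.lists, Multiset.lists_nodup_finset V⟩

theorem mem_arrangements {V : Finset α} {l : List α} :
    l ∈ V.arrangements ↔ (l : Multiset α) = V.val := by
  rw [arrangements, mem_mk, Multiset.mem_lists_iff, eq_comm]
  rfl

@[simp]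
theorem arrangements_empty : (∅ : Finset α).arrangements = {[]} := by
  ext l
  simp [mem_arrangements]

theorem card_arrangements (V : Finset α) : #V.arrangements = (#V).factorial := by
  rw [arrangements, card_mk, ← V.coe_toList, Multiset.lists_coe, Multiset.coe_card,
    List.length_permutations, length_toList]

theorem length_of_mem_arrangements {V : Finset α} {l : List α} (hl : l ∈ V.arrangements) :
    l.length = #V := by
  rw [card_def, ← mem_arrangements.1 hl, Multiset.coe_card]

theorem eq_nil_iff_of_mem_arrangements {V : Finset α} {l : List α} (hl : l ∈ V.arrangements) :
    l = [] ↔ V = ∅ := by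
  rw [← List.length_eq_zero_iff, length_of_mem_arrangements hl, card_eq_zero]

theorem mem_of_mem_arrangements {V : Finset α} {l : List α} (hl : l ∈ V.arrangements) {x : α}
    (hx : x ∈ l) : x ∈ V := by
  rw [← mem_val, ← mem_arrangements.1 hl]
  exact Multiset.mem_coe.2 hx

theorem mem_arrangements_iff_nodup [DecidableEq α] {V : Finset α} {l : List α} :
    l ∈ V.arrangements ↔ l.Nodup ∧ ∀ x, x ∈ l ↔ x ∈ V := by
  refine ⟨fun hl => ⟨?_, fun x => ?_⟩, fun ⟨hl, hmem⟩ => ?_⟩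
  · rw [← Multiset.coe_nodup, mem_arrangements.1 hl]
    exact V.nodup
  · rw [← Multiset.mem_coe, mem_arrangements.1 hl, mem_val]
  · rw [mem_arrangements, Multiset.Nodup.ext (Multiset.coe_nodup.2 hl) V.nodup]
    simpa using hmem

theorem mem_arrangements_insert [DecidableEq α] {M : α} {W : Finset α} (hM : M ∉ W)
    {l : List α} :
    l ∈ (insert M W).arrangements ↔
      ∃ A ⊆ W, ∃ l₁ ∈ A.arrangements, ∃ l₂ ∈ (W \ A).arrangements, l = l₁ ++ M :: l₂ := by
  simp only [mem_arrangements, insert_val_of_notMem hM, sdiff_val]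
  constructor
  · intro hl
    obtain ⟨l₁, l₂, rfl⟩ :=
      List.append_of_mem (Multiset.mem_coe.1 (hl ▸ Multiset.mem_cons_self M _))
    rw [← Multiset.coe_add, ← Multiset.cons_coe, Multiset.add_cons, Multiset.cons_inj_right] at hl
    have hle : (l₁ : Multiset α) ≤ W.val := hl ▸ Multiset.le_add_right _ _
    refine ⟨⟨l₁, Multiset.nodup_of_le hle W.nodup⟩, val_le_iff.1 hle, l₁, rfl, l₂, ?_, rfl⟩
    change (l₂ : Multiset α) = W.val - l₁
    rw [← hl, add_tsub_cancel_left]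
  · rintro ⟨A, hA, l₁, h₁, l₂, h₂, rfl⟩
    rw [← Multiset.coe_add, ← Multiset.cons_coe, Multiset.add_cons, h₁, h₂,
      add_tsub_cancel_of_le (val_le_iff.2 hA)]

theorem card_filter_arrangements_insert [DecidableEq α] {M : α} {W : Finset α} (hM : M ∉ W)
    (P : List α → Prop) [DecidablePred P] :
    #((insert M W).arrangements.filter P) = ∑ A ∈ W.powerset,
      #((A.arrangements ×ˢ (W \ A).arrangements).filter fun p => P (p.1 ++ M :: p.2)) := by
  rw [← card_sigma]
  symm
  refine card_bij (fun x _ => x.2.1 ++ M :: x.2.2) ?_ ?_ ?_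
  · rintro ⟨A, l₁, l₂⟩ hx
    simp only [mem_sigma, mem_powerset, mem_filter, mem_product] at hx ⊢
    exact ⟨(mem_arrangements_insert hM).2 ⟨A, hx.1, l₁, hx.2.1.1, l₂, hx.2.1.2, rfl⟩, hx.2.2⟩
  · rintro ⟨A, l₁, l₂⟩ hx ⟨A', l₁', l₂'⟩ hx' h
    simp only [mem_sigma, mem_powerset, mem_filter, mem_product] at hx hx'
    have hM₁ : M ∉ l₁ := fun h => hM (hx.1 (mem_of_mem_arrangements hx.2.1.1 h))
    have hM₂ : M ∉ l₂ := fun h => hM (mem_sdiff.1 (mem_of_mem_arrangements hx.2.1.2 h)).1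
    obtain ⟨rfl, -, rfl⟩ := (List.append_cons_inj_of_notMem hM₁ hM₂).1 h
    obtain rfl : A = A' :=
      val_inj.1 ((mem_arrangements.1 hx.2.1.1).symm.trans (mem_arrangements.1 hx'.2.1.1))
    rfl
  · intro l hl
    obtain ⟨hl, hP⟩ := mem_filter.1 hl
    obtain ⟨A, hA, l₁, h₁, l₂, h₂, rfl⟩ := (mem_arrangements_insert hM).1 hl
    exact ⟨⟨A, l₁, l₂⟩, by simp_all, rfl⟩

theorem card_filter_ofFn_comp_perm [DecidableEq α] {n : ℕ} (e : Fin n ↪ α)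
    (P : List α → Prop) [DecidablePred P] :
    #(univ.filter fun σ : Equiv.Perm (Fin n) => P (List.ofFn (e ∘ σ))) =
      #((univ.map e).arrangements.filter P) := by
  let word : Equiv.Perm (Fin n) ↪ List α :=
    ⟨fun σ => List.ofFn (e ∘ σ), fun σ τ h =>
      Equiv.ext fun i => e.injective (congrFun (List.ofFn_injective h) i)⟩
  have himage : univ.map word = (univ.map e).arrangements := by
    refine eq_of_subset_of_card_le (fun l hl => ?_) ?_
    · obtain ⟨σ, -, rfl⟩ := mem_map.1 hl
      refine mem_arrangements_iff_nodup.2 ⟨List.nodup_ofFn.2 (e.injective.comp σ.injective),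
        fun x => ?_⟩
      change x ∈ List.ofFn (e ∘ σ) ↔ _
      simp only [List.mem_ofFn, Function.comp_apply, mem_map, mem_univ, true_and]
      exact ⟨fun ⟨i, hi⟩ => ⟨σ i, hi⟩, fun ⟨j, hj⟩ => ⟨σ.symm j, by simpa using hj⟩⟩
    · rw [card_arrangements, card_map, card_map, card_univ, card_univ, Fintype.card_perm,
        Fintype.card_fin]
  rw [← himage, filter_map, card_map]
  rfl

theorem card_filter_product_of_iff {β : Type*} {s : Finset α} {t : Finset β}
    {P : α × β → Prop} {Q : α → Prop} {R : β → Prop} [DecidablePred P] [DecidablePred Q]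
    [DecidablePred R] (h : ∀ x ∈ s, ∀ y ∈ t, P (x, y) ↔ Q x ∧ R y) :
    #((s ×ˢ t).filter P) = #(s.filter Q) * #(t.filter R) := by
  rw [← card_product, ← filter_product]
  congr 1
  exact filter_congr fun p hp => h p.1 (mem_product.1 hp).1 p.2 (mem_product.1 hp).2

end Finset

section PeakCount

variable {α : Type*} [LinearOrder α]

def peakCount (V : Finset α) (S : Finset ℕ) : ℕ :=
  #(V.arrangements.filter fun l => l.peaks = S)

@[simp]
theorem peakCount_empty_empty : peakCount (∅ : Finset α) ∅ = 1 := by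
  simp [peakCount, filter_singleton]

theorem peakCount_singleton_eq_zero {V : Finset α} {m : ℕ} (hm : m < 2 ∨ #V ≤ m) :
    peakCount V {m} = 0 := by
  refine card_eq_zero.2 (filter_false_of_mem fun l hl hpeaks => ?_)
  have hmem : m ∈ l.peaks := hpeaks ▸ mem_singleton_self m
  have := List.two_le_of_mem_peaks hmem
  have := List.lt_length_of_mem_peaks hmem
  rw [length_of_mem_arrangements hl] at this
  omega

theorem forall_lt_of_mem_arrangements {V : Finset α} {M : α} (hV : ∀ x ∈ V, x < M) {l : List α}
    (hl : l ∈ V.arrangements) : ∀ x ∈ l, x < M :=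
  fun x hx => hV x (mem_of_mem_arrangements hl hx)

theorem card_filter_peaks_append_cons_eq_empty {M : α} {W A : Finset α} (hW : ∀ x ∈ W, x < M)
    (hA : A ⊆ W) :
    #((A.arrangements ×ˢ (W \ A).arrangements).filter fun p => (p.1 ++ M :: p.2).peaks = ∅) =
      if A = ∅ ∨ A = W then peakCount A ∅ * peakCount (W \ A) ∅ else 0 := by
  have key : ∀ l₁ ∈ A.arrangements, ∀ l₂ ∈ (W \ A).arrangements,
      (l₁ ++ M :: l₂).peaks = ∅ ↔ (A = ∅ ∨ A = W) ∧ l₁.peaks = ∅ ∧ l₂.peaks = ∅ := by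
    intro l₁ h₁ l₂ h₂
    rw [List.peaks_append_cons_eq_empty_iff
      (forall_lt_of_mem_arrangements (fun x hx => hW x (hA hx)) h₁)
      (forall_lt_of_mem_arrangements (fun x hx => hW x (mem_sdiff.1 hx).1) h₂),
      eq_nil_iff_of_mem_arrangements h₁, eq_nil_iff_of_mem_arrangements h₂,
      sdiff_eq_empty_iff_subset, (subset_antisymm_iff.trans (and_iff_right hA)).symm]
  split_ifs with h
  · exact card_filter_product_of_iff fun l₁ h₁ l₂ h₂ => (key l₁ h₁ l₂ h₂).trans (and_iff_right h)
  · exact card_eq_zero.2 (filter_false_of_mem fun p hp hpeaks =>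
      h ((key p.1 (mem_product.1 hp).1 p.2 (mem_product.1 hp).2).1 hpeaks).1)

theorem peakCount_empty (V : Finset α) : peakCount V ∅ = 2 ^ (#V - 1) := by
  induction V using Finset.induction_on_max with
  | empty => simp
  | insert M W hW ih =>
    have hM : M ∉ W := fun h => lt_irrefl M (hW M h)
    rw [peakCount, card_filter_arrangements_insert hM, card_insert_of_notMem hM,
      sum_congr rfl fun A hA => card_filter_peaks_append_cons_eq_empty hW (mem_powerset.1 hA)]
    rcases W.eq_empty_or_nonempty with rfl | hne
    · simp
    rw [sum_eq_add ∅ W hne.ne_empty.symm (fun A _ hA => if_neg (by tauto)) (by simp) (by simp)]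
    have hk : 1 ≤ #W := hne.card_pos
    simp only [true_or, or_true, if_true, sdiff_empty, sdiff_self, bot_eq_empty,
      peakCount_empty_empty, ih, one_mul, mul_one]
    rw [← two_mul, ← pow_succ']
    congr 1
    omega

theorem card_filter_peaks_append_cons_eq_singleton_of_ne {M : α} {W A : Finset α}
    (hW : ∀ x ∈ W, x < M) (hA : A ⊆ W) (h₀ : A ≠ ∅) (hAW : A ≠ W) {m : ℕ} (hm : 1 ≤ m) :
    #((A.arrangements ×ˢ (W \ A).arrangements).filter fun p => (p.1 ++ M :: p.2).peaks = {m}) =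
      if #A = m - 1 then 2 ^ (#W - 2) else 0 := by
  have key : ∀ l₁ ∈ A.arrangements, ∀ l₂ ∈ (W \ A).arrangements,
      (l₁ ++ M :: l₂).peaks = {m} ↔ (#A = m - 1 ∧ l₁.peaks = ∅) ∧ l₂.peaks = ∅ := by
    intro l₁ h₁ l₂ h₂
    have hne₂ : l₂ ≠ [] := by
      rw [Ne, eq_nil_iff_of_mem_arrangements h₂, sdiff_eq_empty_iff_subset]
      exact fun h => hAW (subset_antisymm hA h)
    rw [List.peaks_append_cons_eq_singleton_iff
      (forall_lt_of_mem_arrangements (fun x hx => hW x (hA hx)) h₁)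
      (forall_lt_of_mem_arrangements (fun x hx => hW x (mem_sdiff.1 hx).1) h₂)
      (by rwa [Ne, eq_nil_iff_of_mem_arrangements h₁]) hne₂,
      length_of_mem_arrangements h₁, and_assoc, show #A + 1 = m ↔ #A = m - 1 by omega]
  split_ifs with hcard
  · rw [card_filter_product_of_iff fun l₁ h₁ l₂ h₂ =>
      (key l₁ h₁ l₂ h₂).trans (by rw [and_iff_right hcard])]
    change peakCount A ∅ * peakCount (W \ A) ∅ = _
    have hAW' : #A < #W := card_lt_card (Finset.ssubset_iff_subset_ne.2 ⟨hA, hAW⟩)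
    have hA' : 0 < #A := card_pos.2 (nonempty_iff_ne_empty.2 h₀)
    rw [peakCount_empty, peakCount_empty, card_sdiff_of_subset hA, ← pow_add]
    congr 1
    omega
  · exact card_eq_zero.2 (filter_false_of_mem fun p hp hpeaks =>
      hcard ((key p.1 (mem_product.1 hp).1 p.2 (mem_product.1 hp).2).1 hpeaks).1.1)

theorem card_filter_peaks_append_cons_eq_singleton {M : α} {W A : Finset α}
    (hW : ∀ x ∈ W, x < M) (hA : A ⊆ W) {m : ℕ} (hm : 2 ≤ m) (hmW : m ≤ #W) :
    #((A.arrangements ×ˢ (W \ A).arrangements).filter fun p => (p.1 ++ M :: p.2).peaks = {m}) =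
      (if A = ∅ then peakCount W {m - 1} else 0) + (if A = W then peakCount W {m} else 0) +
        if #A = m - 1 then 2 ^ (#W - 2) else 0 := by
  have hWne : W ≠ ∅ := by
    rintro rfl
    simp at hmW
    omega
  by_cases h₀ : A = ∅
  · subst h₀
    rw [if_pos rfl, if_neg (Ne.symm hWne), if_neg (by simp; omega), add_zero, add_zero,
      card_filter_product_of_iff (Q := fun l => l.peaks = ∅) (R := fun l => l.peaks = {m - 1}),
      sdiff_empty]
    · change peakCount ∅ ∅ * peakCount W {m - 1} = _
      rw [peakCount_empty_empty, one_mul]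
    · intro l₁ h₁ l₂ h₂
      obtain rfl : l₁ = [] := by simpa using h₁
      rw [sdiff_empty] at h₂
      simpa using List.peaks_cons_eq_singleton_iff (forall_lt_of_mem_arrangements hW h₂)
        (by omega)
  by_cases hAW : A = W
  · subst hAW
    rw [if_neg h₀, if_pos rfl, if_neg (by omega), zero_add, add_zero,
      card_filter_product_of_iff (Q := fun l => l.peaks = {m}) (R := fun l => l.peaks = ∅),
      sdiff_self, bot_eq_empty]
    · change peakCount A {m} * peakCount ∅ ∅ = _
      rw [peakCount_empty_empty, mul_one]
    · intro l₁ h₁ l₂ h₂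
      obtain rfl : l₂ = [] := by simpa using h₂
      simp [List.peaks_append_singleton_of_forall_lt (forall_lt_of_mem_arrangements hW h₁)]
  rw [if_neg h₀, if_neg hAW, zero_add, zero_add,
    card_filter_peaks_append_cons_eq_singleton_of_ne hW hA h₀ hAW (by omega)]

theorem peakCount_singleton (V : Finset α) {m : ℕ} (hm : 2 ≤ m) (hmV : m < #V) :
    peakCount V {m} = ((#V - 1).choose (m - 1) - 1) * 2 ^ (#V - 2) := by
  induction V using Finset.induction_on_max generalizing m with
  | empty => simp at hmV
  | insert M W hW ih =>
    have hM : M ∉ W := fun h => lt_irrefl M (hW M h)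
    rw [card_insert_of_notMem hM] at hmV ⊢
    rw [peakCount, card_filter_arrangements_insert hM,
      sum_congr rfl fun A hA => card_filter_peaks_append_cons_eq_singleton hW (mem_powerset.1 hA)
        hm (by omega),
      sum_add_distrib, sum_add_distrib, sum_ite_eq', sum_ite_eq', if_pos (empty_mem_powerset W),
      if_pos (mem_powerset_self W), ← sum_filter, ← powersetCard_eq_filter, sum_const,
      card_powersetCard, smul_eq_mul, Nat.add_sub_cancel]
    have hprev : peakCount W {m - 1} = ((#W - 1).choose (m - 2) - 1) * 2 ^ (#W - 2) := by
      rcases (by omega : m = 2 ∨ 2 < m) with rfl | h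
      · simp [peakCount_singleton_eq_zero]
      · rw [ih (by omega) (by omega), show m - 1 - 1 = m - 2 by omega]
    have hsame : peakCount W {m} = ((#W - 1).choose (m - 1) - 1) * 2 ^ (#W - 2) := by
      rcases (by omega : m = #W ∨ m < #W) with h | h
      · rw [peakCount_singleton_eq_zero (Or.inr h.ge), h, Nat.choose_self, Nat.sub_self,
          zero_mul]
      · exact ih hm h
    obtain ⟨a, ha⟩ : ∃ a, (#W - 1).choose (m - 2) = a + 1 :=
      Nat.exists_eq_add_one.2 (Nat.choose_pos (by omega))
    obtain ⟨b, hb⟩ : ∃ b, (#W - 1).choose (m - 1) = b + 1 :=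
      Nat.exists_eq_add_one.2 (Nat.choose_pos (by omega))
    have hpascal : (#W).choose (m - 1) = a + 1 + (b + 1) := by
      rw [← ha, ← hb, show #W = #W - 1 + 1 by omega, show m - 1 = m - 2 + 1 by omega,
        Nat.choose_succ_succ', show m - 2 + 1 = m - 1 by omega, Nat.add_sub_cancel]
    rw [hprev, hsame, hpascal, ha, hb, show a + 1 + (b + 1) - 1 = a + b + 1 by omega,
      show #W + 1 - 2 = #W - 2 + 1 by omega, pow_succ, Nat.add_sub_cancel, Nat.add_sub_cancel]
    ring

end PeakCount

section SignedPermutation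

def signedWord (n : ℕ) (π : Equiv.Perm (Fin n) × (Fin n → Bool)) : List ℤ :=
  List.ofFn fun i : Fin n => bval n π (i + 1)

theorem bPeakSet_eq_peaks_signedWord (n : ℕ) (π : Equiv.Perm (Fin n) × (Fin n → Bool)) :
    bPeakSet n π = (signedWord n π).peaks := by
  ext i
  simp only [bPeakSet, mem_filter, mem_Icc, List.mem_peaks, signedWord, List.length_ofFn,
    List.getElem_ofFn]
  constructor
  · rintro ⟨⟨h2, hi⟩, h⟩
    refine ⟨h2, by omega, ?_⟩
    simpa [show i - 2 + 1 = i - 1 by omega, show i - 1 + 1 = i by omega] using h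
  · rintro ⟨h2, hi, h⟩
    refine ⟨⟨h2, by omega⟩, ?_⟩
    simpa [show i - 2 + 1 = i - 1 by omega, show i - 1 + 1 = i by omega] using h

/-- `δ v` says whether the value `v + 1` occurs negated: signs are indexed by absolute value. -/
def signedEmbedding {n : ℕ} (δ : Fin n → Bool) : Fin n ↪ ℤ where
  toFun v := (if δ v then -1 else 1) * ((v : ℕ) + 1 : ℤ)
  inj' v w h := Fin.ext (by dsimp only at h; split_ifs at h <;> omega)

theorem signedWord_mk_comp {n : ℕ} (σ : Equiv.Perm (Fin n)) (δ : Fin n → Bool) :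
    signedWord n (σ, δ ∘ σ) = List.ofFn (signedEmbedding δ ∘ σ) := by
  refine List.ofFn_inj.2 (funext fun i => ?_)
  simp [bval, signedEmbedding]

theorem card_filter_signedWord {n : ℕ} (P : List ℤ → Prop) [DecidablePred P] :
    #(univ.filter fun π => P (signedWord n π)) =
      ∑ δ : Fin n → Bool, #(univ.filter fun σ : Equiv.Perm (Fin n) =>
        P (List.ofFn (signedEmbedding δ ∘ σ))) := by
  let e : (Fin n → Bool) × Equiv.Perm (Fin n) ≃ Equiv.Perm (Fin n) × (Fin n → Bool) :=
    { toFun := fun x => (x.2, x.1 ∘ x.2)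
      invFun := fun π => (π.2 ∘ π.1.symm, π.1)
      left_inv := fun x => by ext <;> simp
      right_inv := fun π => by ext <;> simp }
  rw [card_filter, ← e.sum_comp, Fintype.sum_prod_type]
  simp only [card_filter, e, Equiv.coe_fn_mk, signedWord_mk_comp]

theorem PB_eq_sum_peakCount (n : ℕ) (S : Finset ℕ) :
    PB n S = ∑ δ : Fin n → Bool, peakCount (univ.map (signedEmbedding δ)) S := by
  simp only [PB, bPeakSet_eq_peaks_signedWord]
  rw [card_filter_signedWord fun w => w.peaks = S]
  exact sum_congr rfl fun δ _ => card_filter_ofFn_comp_perm (signedEmbedding δ) fun w => w.peaks = S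

end SignedPermutation

/-- `#P_B({m},n) = (C(n-1,m-1) - 1)·2^(2n-2)`. -/
theorem stmt6 (n m : ℕ) (h2 : 2 ≤ m) (hm : m ≤ n - 1) :
    PB n {m} = (Nat.choose (n - 1) (m - 1) - 1) * 2 ^ (2 * n - 2) := by
  have hcount : ∀ δ : Fin n → Bool, peakCount (univ.map (signedEmbedding δ)) {m} =
      ((n - 1).choose (m - 1) - 1) * 2 ^ (n - 2) := fun δ => by
    simpa using peakCount_singleton (univ.map (signedEmbedding δ)) h2 (by simp; omega)
  rw [PB_eq_sum_peakCount, sum_congr rfl fun δ _ => hcount δ, sum_const, card_univ,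
    Fintype.card_fun, Fintype.card_bool, Fintype.card_fin, smul_eq_mul, mul_left_comm,
    ← pow_add]
  congr 2
  omega
end
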